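/- arXiv:1705.00182 — 11 statements merged into one kernel-verified Lean document; each statement's English description precedes it below -/
import Mathlib

section
/- Let f : (0,∞)^d → (0,∞) be a coordinate-wise regularly varying function. Then there exist real numbers H₁,...,H_d and a coordinate-wise slowly varying function L : (0,∞)^d → (0,∞) such that f(t) = (∏_{i=1}^d t_i^{H_i})·L(t) for all t ∈ (0,∞)^d; moreover the limit function is l(x) = ∏_{i=1}^d x_i^{H_i}. -/
open Filter Topology

/-- If `f : (0,∞)^d → (0,∞)` is coordinate-wise regularly varying
(with continuous limit function `l`), then there exist real numbers `H₁,...,H_d`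
and a coordinate-wise slowly varying `L : (0,∞)^d → (0,∞)` such that
`f(t) = (∏ i, t_i^{H_i})·L(t)`; moreover `l(x) = ∏ i, x_i^{H_i}`. -/
theorem stmt_3 {d : ℕ} (f l : (Fin d → ℝ) → ℝ)
    (hf : ∀ t : Fin d → ℝ, (∀ i, 0 < t i) → 0 < f t)
    (hlpos : ∀ x : Fin d → ℝ, (∀ i, 0 < x i) → 0 < l x)
    (hlcont : ContinuousOn l {x : Fin d → ℝ | ∀ i, 0 < x i})
    (hlim : ∀ x : Fin d → ℝ, (∀ i, 0 < x i) →
      Tendsto (fun t : Fin d → ℝ => f (t * x) / f t) atTop (𝓝 (l x))) :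
    ∃ (H : Fin d → ℝ) (L : (Fin d → ℝ) → ℝ),
      (∀ t : Fin d → ℝ, (∀ i, 0 < t i) → 0 < L t) ∧
      (∀ x : Fin d → ℝ, (∀ i, 0 < x i) →
        Tendsto (fun t : Fin d → ℝ => L (t * x) / L t) atTop (𝓝 1)) ∧
      (∀ t : Fin d → ℝ, (∀ i, 0 < t i) → f t = (∏ i, t i ^ H i) * L t) ∧
      (∀ x : Fin d → ℝ, (∀ i, 0 < x i) → l x = ∏ i, x i ^ H i) := by
  classical
  set S : Set (Fin d → ℝ) := {x | ∀ i, 0 < x i} with hSdef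
  have hSopen : IsOpen S := by
    have : S = Set.pi Set.univ (fun _ => Set.Ioi (0:ℝ)) := by
      ext x; simp [hSdef, Set.mem_pi]
    rw [this]
    exact isOpen_set_pi Set.finite_univ (fun i _ => isOpen_Ioi)
  have hpos_ev : ∀ᶠ t : Fin d → ℝ in atTop, ∀ i, 0 < t i := by
    filter_upwards [eventually_ge_atTop (1 : Fin d → ℝ)] with t ht i
    exact lt_of_lt_of_le one_pos (ht i)
  have hmulpos : ∀ {x y : Fin d → ℝ}, (∀ i, 0 < x i) → (∀ i, 0 < y i) →
      ∀ i, 0 < (x * y) i := fun hx hy i => mul_pos (hx i) (hy i)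
  have hscale : ∀ (x : Fin d → ℝ), (∀ i, 0 < x i) →
      Tendsto (fun t : Fin d → ℝ => t * x) atTop atTop := by
    intro x hx
    rw [tendsto_atTop]
    intro b
    filter_upwards [eventually_ge_atTop (fun i => b i / x i)] with t ht
    intro i
    have h1 : b i / x i ≤ t i := ht i
    have h2 : (b i / x i) * x i = b i := div_mul_cancel₀ _ (ne_of_gt (hx i))
    calc b i = (b i / x i) * x i := h2.symm
    _ ≤ t i * x i := mul_le_mul_of_nonneg_right h1 (le_of_lt (hx i))
  have hl1 : l 1 = 1 := by
    have h1 := hlim 1 (fun i => one_pos)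
    have h2 : Tendsto (fun t : Fin d → ℝ => f (t * 1) / f t) atTop (𝓝 1) := by
      have hc : Tendsto (fun _ : Fin d → ℝ => (1:ℝ)) atTop (𝓝 1) := tendsto_const_nhds
      apply Tendsto.congr' _ hc
      filter_upwards [hpos_ev] with t ht
      rw [mul_one, div_self (ne_of_gt (hf t ht))]
    exact tendsto_nhds_unique h1 h2
  have hlmul : ∀ x y : Fin d → ℝ, (∀ i, 0 < x i) → (∀ i, 0 < y i) →
      l (x * y) = l x * l y := by
    intro x y hx hy
    have h1 := hlim (x * y) (hmulpos hx hy)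
    have ha : Tendsto (fun t : Fin d → ℝ => f ((t * x) * y) / f (t * x)) atTop (𝓝 (l y)) :=
      (hlim y hy).comp (hscale x hx)
    have h2 : Tendsto (fun t : Fin d → ℝ => f (t * (x * y)) / f t) atTop (𝓝 (l y * l x)) := by
      apply Tendsto.congr' _ (ha.mul (hlim x hx))
      filter_upwards [hpos_ev] with t ht
      have hne1 : f (t * x) ≠ 0 := ne_of_gt (hf _ (hmulpos ht hx))
      have hne2 : f t ≠ 0 := ne_of_gt (hf t ht)
      rw [← mul_assoc]
      field_simp
    have := tendsto_nhds_unique h1 h2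
    rw [this, mul_comm]
  -- the additive version
  set E : (Fin d → ℝ) → (Fin d → ℝ) := fun u i => Real.exp (u i) with hEdef
  have hEpos : ∀ u : Fin d → ℝ, ∀ i, 0 < E u i := fun u i => Real.exp_pos _
  set φ : (Fin d → ℝ) → ℝ := fun u => Real.log (l (E u)) with hφdef
  have hφadd : ∀ u v : Fin d → ℝ, φ (u + v) = φ u + φ v := by
    intro u v
    have hE : E (u + v) = E u * E v := by
      funext i; simp [hEdef, Real.exp_add]
    simp only [hφdef, hE, hlmul _ _ (hEpos u) (hEpos v)]
    exact Real.log_mul (ne_of_gt (hlpos _ (hEpos u))) (ne_of_gt (hlpos _ (hEpos v)))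
  have hφcont : Continuous φ := by
    have hE : Continuous E :=
      continuous_pi (fun i => Real.continuous_exp.comp (continuous_apply i))
    rw [continuous_iff_continuousAt]
    intro u
    have hmem : E u ∈ S := hEpos u
    have hcl : ContinuousAt l (E u) := hlcont.continuousAt (hSopen.mem_nhds hmem)
    exact ((Real.continuousAt_log (ne_of_gt (hlpos _ (hEpos u)))).comp hcl).comp
      hE.continuousAt
  set Φ : (Fin d → ℝ) →+ ℝ := AddMonoidHom.mk' φ hφadd with hΦdef
  have hsmul : ∀ (c : ℝ) (u : Fin d → ℝ), φ (c • u) = c * φ u := by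
    intro c u
    have := map_real_smul Φ hφcont c u
    simpa [hΦdef, smul_eq_mul] using this
  set e : Fin d → (Fin d → ℝ) := fun i j => if i = j then 1 else 0 with hedef
  set H : Fin d → ℝ := fun i => φ (e i) with hHdef
  have hφeq : ∀ u : Fin d → ℝ, φ u = ∑ i, u i * H i := by
    intro u
    have hu : u = ∑ i, u i • e i := pi_eq_sum_univ u
    conv_lhs => rw [hu]
    have h1 : φ (∑ i, u i • e i) = ∑ i, φ (u i • e i) := map_sum Φ _ _
    rw [h1]
    exact Finset.sum_congr rfl fun i _ => hsmul (u i) _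
  have hlfor : ∀ x : Fin d → ℝ, (∀ i, 0 < x i) → l x = ∏ i, x i ^ H i := by
    intro x hx
    have hEx : E (fun i => Real.log (x i)) = x := funext fun i => Real.exp_log (hx i)
    have h1 : φ (fun i => Real.log (x i)) = Real.log (l x) := by
      simp only [hφdef, hEx]
    have h2 := hφeq (fun i => Real.log (x i))
    have h3 : l x = Real.exp (∑ i, Real.log (x i) * H i) := by
      rw [← h2, h1, Real.exp_log (hlpos x hx)]
    rw [h3, Real.exp_sum]
    exact Finset.prod_congr rfl fun i _ => (Real.rpow_def_of_pos (hx i) (H i)).symm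
  have hprodpos : ∀ t : Fin d → ℝ, (∀ i, 0 < t i) → (0:ℝ) < ∏ i, t i ^ H i :=
    fun t ht => Finset.prod_pos fun i _ => Real.rpow_pos_of_pos (ht i) _
  refine ⟨H, fun t => if h : ∀ i, 0 < t i then f t / ∏ i, t i ^ H i else 1, ?_, ?_, ?_, hlfor⟩
  · intro t ht
    simp only [dif_pos ht]
    exact div_pos (hf t ht) (hprodpos t ht)
  · intro x hx
    have hPx : (0:ℝ) < ∏ i, x i ^ H i := hprodpos x hx
    have key : Tendsto (fun t : Fin d → ℝ => (f (t * x) / f t) / ∏ i, x i ^ H i)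
        atTop (𝓝 1) := by
      have := (hlim x hx).div_const (∏ i, x i ^ H i)
      rwa [hlfor x hx, div_self (ne_of_gt hPx), ← hlfor x hx, hlfor x hx] at this
    apply Tendsto.congr' _ key
    filter_upwards [hpos_ev] with t ht
    have htx : ∀ i, 0 < (t * x) i := hmulpos ht hx
    simp only [dif_pos ht, dif_pos htx]
    have hsplit : ∏ i, (t * x) i ^ H i = (∏ i, t i ^ H i) * ∏ i, x i ^ H i := by
      rw [← Finset.prod_mul_distrib]
      exact Finset.prod_congr rfl fun i _ =>
        Real.mul_rpow (le_of_lt (ht i)) (le_of_lt (hx i))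
    have hft : f t ≠ 0 := ne_of_gt (hf t ht)
    have hPt : (∏ i, t i ^ H i) ≠ 0 := ne_of_gt (hprodpos t ht)
    rw [hsplit]
    field_simp
  · intro t ht
    simp only [dif_pos ht]
    rw [eq_comm, mul_comm, div_mul_cancel₀ _ (ne_of_gt (hprodpos t ht))]
end

section
/- Let f : (0,∞)^d → (0,∞) be a measurable radially regularly varying function with limit function φ, i.e. f(tx)/f(te) → φ(x) > 0 as t → ∞ for every x ∈ (0,∞)^d, where e = (d^{-1/2},...,d^{-1/2}). Then there exists ρ ∈ ℝ such that φ is homogeneous of degree ρ: φ(sx) = s^ρ φ(x) for every s > 0 and every x ∈ (0,∞)^d, and φ(e) = 1. -/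
/-!
Writing `f (t • s • x) / f (t • e)` as `f ((t * s) • x) / f ((t * s) • e) * (f (t • s • e) / f (t • e))`
and letting `t → ∞` gives `φ (s • x) = φ (s • e) * φ x`. Hence `s ↦ φ (s • e)` is a positive
multiplicative function on `(0, ∞)`, measurable as a pointwise limit of measurable functions, so it is
a power `s ^ ρ`.
-/

open Filter Topology

/- `u ↦ log g (exp u)` is a measurable additive map, hence continuous, hence linear. -/
theorem exists_rpow_of_map_mul {g : ℝ → ℝ} (hpos : ∀ s, 0 < s → 0 < g s)
    (hmul : ∀ s t, 0 < s → 0 < t → g (s * t) = g s * g t)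
    (hmeas : Measurable fun u => g (Real.exp u)) :
    ∃ ρ : ℝ, ∀ s, 0 < s → g s = s ^ ρ := by
  let H : ℝ →+ ℝ := AddMonoidHom.mk' (fun u => Real.log (g (Real.exp u))) fun a b => by
    rw [Real.exp_add, hmul _ _ (Real.exp_pos a) (Real.exp_pos b),
      Real.log_mul (hpos _ (Real.exp_pos a)).ne' (hpos _ (Real.exp_pos b)).ne']
  have hH : Continuous H :=
    MeasureTheory.Measure.AddMonoidHom.continuous_of_measurable H (Real.measurable_log.comp hmeas)
  refine ⟨H 1, fun s hs => ?_⟩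
  have hlin : H (Real.log s) = Real.log s * H 1 := by
    simpa using map_real_smul H hH (Real.log s) 1
  calc g s = Real.exp (H (Real.log s)) := by
        simp [H, Real.exp_log hs, Real.exp_log (hpos s hs)]
    _ = s ^ H 1 := by rw [hlin, Real.rpow_def_of_pos hs]

section RegularVariation

variable {E : Type*} [AddCommGroup E] [Module ℝ E] {C : Set E}
  {f φ : E → ℝ} {e : E}

theorem limit_smul_eq_mul (hC : ∀ t : ℝ, 0 < t → ∀ x ∈ C, t • x ∈ C) (heC : e ∈ C)
    (hfe : ∀ t : ℝ, 0 < t → f (t • e) ≠ 0)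
    (hlim : ∀ x ∈ C, Tendsto (fun t : ℝ => f (t • x) / f (t • e)) atTop (𝓝 (φ x)))
    {s : ℝ} (hs : 0 < s) {x : E} (hx : x ∈ C) :
    φ (s • x) = φ (s • e) * φ x := by
  have hrescaled : Tendsto (fun t : ℝ => f ((t * s) • x) / f ((t * s) • e)) atTop (𝓝 (φ x)) :=
    (hlim x hx).comp (tendsto_id.atTop_mul_const hs)
  have hprod : Tendsto (fun t : ℝ => f (t • s • x) / f (t • e)) atTop (𝓝 (φ (s • e) * φ x)) := by
    refine ((hlim _ (hC s hs e heC)).mul hrescaled).congr' ?_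
    filter_upwards [eventually_gt_atTop 0] with t ht
    have hts := hfe _ (mul_pos ht hs)
    have ht' := hfe _ ht
    rw [smul_smul, smul_smul]
    field_simp
  exact tendsto_nhds_unique (hlim _ (hC s hs x hx)) hprod

theorem measurable_limit_exp_smul [MeasurableSpace E] (hsmul : Measurable fun c : ℝ => c • e)
    (hf : Measurable f) (hC : ∀ t : ℝ, 0 < t → ∀ x ∈ C, t • x ∈ C) (heC : e ∈ C)
    (hlim : ∀ x ∈ C, Tendsto (fun t : ℝ => f (t • x) / f (t • e)) atTop (𝓝 (φ x))) :
    Measurable fun u : ℝ => φ (Real.exp u • e) := by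
  refine measurable_of_tendsto_metrizable'
    (f := fun (n : ℕ) (u : ℝ) => f (((n : ℝ) * Real.exp u) • e) / f ((n : ℝ) • e)) atTop
    (fun n => (hf.comp (hsmul.comp (measurable_const.mul Real.measurable_exp))).div_const _) ?_
  refine tendsto_pi_nhds.2 fun u => ?_
  have := (hlim _ (hC _ (Real.exp_pos u) e heC)).comp tendsto_natCast_atTop_atTop
  simpa [Function.comp_def, smul_smul] using this

end RegularVariation

theorem stmt_4_general {d : ℕ} (e : Fin d → ℝ)
    (he : e = fun _ => (d : ℝ) ^ (-(1 : ℝ) / 2))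
    (f φ : (Fin d → ℝ) → ℝ)
    (hf : ∀ x : Fin d → ℝ, (∀ i, 0 < x i) → 0 < f x)
    (hfmeas : Measurable f)
    (hφpos : ∀ x : Fin d → ℝ, (∀ i, 0 < x i) → 0 < φ x)
    (hlim : ∀ x : Fin d → ℝ, (∀ i, 0 < x i) →
      Tendsto (fun t : ℝ => f (t • x) / f (t • e)) atTop (𝓝 (φ x))) :
    ∃ ρ : ℝ,
      (∀ s : ℝ, 0 < s → ∀ x : Fin d → ℝ, (∀ i, 0 < x i) →
        φ (s • x) = s ^ ρ * φ x) ∧ φ e = 1 := by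
  have hC : ∀ t : ℝ, 0 < t → ∀ x : Fin d → ℝ, (∀ i, 0 < x i) → ∀ i, 0 < (t • x) i :=
    fun t ht x hx i => mul_pos ht (hx i)
  have heC : ∀ i, 0 < e i := fun i => he ▸ Real.rpow_pos_of_pos (Nat.cast_pos.2 i.pos) _
  have hfe : ∀ t : ℝ, 0 < t → f (t • e) ≠ 0 := fun t ht => (hf _ (hC t ht e heC)).ne'
  have hsplit : ∀ s : ℝ, 0 < s → ∀ x : Fin d → ℝ, (∀ i, 0 < x i) →
      φ (s • x) = φ (s • e) * φ x := fun s hs x hx =>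
    limit_smul_eq_mul (C := {x : Fin d → ℝ | ∀ i, 0 < x i}) hC heC hfe hlim hs hx
  obtain ⟨ρ, hρ⟩ := exists_rpow_of_map_mul (g := fun s => φ (s • e))
    (fun s hs => hφpos _ (hC s hs e heC))
    (fun s t hs ht => by simpa [smul_smul] using hsplit s hs _ (hC t ht e heC))
    (measurable_limit_exp_smul (C := {x : Fin d → ℝ | ∀ i, 0 < x i}) (measurable_id.smul_const e)
      hfmeas hC heC hlim)
  refine ⟨ρ, fun s hs x hx => by rw [hsplit s hs x hx, hρ s hs], ?_⟩
  simpa using hρ 1 one_pos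

/-- Let `f : (0,∞)^d → (0,∞)` be measurable and radially regularly
varying with limit function `φ`: `f(tx)/f(te) → φ(x) > 0` as `t → ∞`, where
`e = (d^{-1/2},...,d^{-1/2})`. Then there is `ρ ∈ ℝ` such that `φ` is homogeneous
of degree `ρ` (`φ(sx) = s^ρ φ(x)` for `s > 0`, `x ∈ (0,∞)^d`) and `φ(e) = 1`. -/
theorem stmt_4 {d : ℕ} (hd : 0 < d) (e : Fin d → ℝ)
    (he : e = fun _ => (d : ℝ) ^ (-(1 : ℝ) / 2))
    (f φ : (Fin d → ℝ) → ℝ)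
    (hf : ∀ x : Fin d → ℝ, (∀ i, 0 < x i) → 0 < f x)
    (hfmeas : Measurable f)
    (hφpos : ∀ x : Fin d → ℝ, (∀ i, 0 < x i) → 0 < φ x)
    (hlim : ∀ x : Fin d → ℝ, (∀ i, 0 < x i) →
      Tendsto (fun t : ℝ => f (t • x) / f (t • e)) atTop (𝓝 (φ x))) :
    ∃ ρ : ℝ,
      (∀ s : ℝ, 0 < s → ∀ x : Fin d → ℝ, (∀ i, 0 < x i) →
        φ (s • x) = s ^ ρ * φ x) ∧ φ e = 1 :=
  stmt_4_general e he f φ hf hfmeas hφpos hlim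
end

section
/- Let f : (0,∞)^d → (0,∞) be a measurable radially regularly varying function. Then there exist ρ ∈ ℝ and a radially slowly varying function L : (0,∞)^d → (0,∞) such that f(x) = ‖x‖^ρ · L(x) for all x ∈ (0,∞)^d. -/
open Filter Topology

section Cauchy
open MeasureTheory ENNReal

theorem cauchy_measurable_linear (h : ℝ → ℝ) (hmeas : Measurable h)
    (hadd : ∀ x y, h (x + y) = h x + h y) : ∀ x, h x = h 1 * x := by
  set H : ℝ →+ ℝ := AddMonoidHom.mk' h hadd with hH
  have hH' : ∀ x, H x = h x := fun _ => rfl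
  -- Step 1: bounded on a neighborhood of 0
  obtain ⟨n, hn⟩ : ∃ n : ℕ, ENNReal.ofReal (7/8) < volume {x : ℝ | x ∈ Set.Icc (0:ℝ) 1 ∧ |h x| ≤ n} := by
    set A : ℕ → Set ℝ := fun n => {x : ℝ | x ∈ Set.Icc (0:ℝ) 1 ∧ |h x| ≤ n} with hA
    have hdir : Directed (fun x1 x2 => x1 ⊆ x2) A := by
      apply Monotone.directed_le
      intro a b hab x hx
      exact ⟨hx.1, hx.2.trans (by exact_mod_cast hab)⟩
    have hunion : (⋃ i, A i) = Set.Icc (0:ℝ) 1 := by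
      ext x
      simp only [Set.mem_iUnion, hA, Set.mem_setOf_eq]
      constructor
      · rintro ⟨i, hi, _⟩; exact hi
      · intro hx
        obtain ⟨i, hi⟩ := exists_nat_ge (|h x|)
        exact ⟨i, hx, hi⟩
    have := hdir.measure_iUnion (μ := volume)
    rw [hunion, Real.volume_Icc] at this
    norm_num at this
    have h78 : ENNReal.ofReal (7/8) < ⨆ i, volume (A i) := by
      rw [← this]
      exact ENNReal.ofReal_lt_one.mpr (by norm_num)
    rw [lt_iSup_iff] at h78
    exact h78
  set A : Set ℝ := {x : ℝ | x ∈ Set.Icc (0:ℝ) 1 ∧ |h x| ≤ n} with hA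
  have hAmeas : MeasurableSet A := by
    have : A = Set.Icc (0:ℝ) 1 ∩ h ⁻¹' (Set.Icc (-(n:ℝ)) n) := by
      ext x; simp only [hA, Set.mem_setOf_eq, Set.mem_inter_iff, Set.mem_preimage, Set.mem_Icc, abs_le]
    rw [this]
    exact measurableSet_Icc.inter (hmeas measurableSet_Icc)
  have hbound : ∀ x : ℝ, |x| ≤ 1/4 → |h x| ≤ 2 * n := by
    intro x hx
    set B : Set ℝ := (fun y => y + x) ⁻¹' A with hB
    have hBvol : volume B = volume A := measure_preimage_add_right volume x A
    have hsub : A ∪ B ⊆ Set.Icc (-(1/4) : ℝ) (5/4) := by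
      rintro y (hy | hy)
      · obtain ⟨⟨ha, hb⟩, -⟩ := hy
        exact Set.mem_Icc.mpr ⟨by linarith, by linarith⟩
      · have hmem := Set.mem_preimage.mp hy
        obtain ⟨⟨ha, hb⟩, -⟩ := hmem
        obtain ⟨h2a, h2b⟩ := abs_le.mp hx
        exact Set.mem_Icc.mpr ⟨by linarith, by linarith⟩
    have hABvol : volume (A ∪ B) ≤ ENNReal.ofReal (3/2) := by
      calc volume (A ∪ B) ≤ volume (Set.Icc (-(1/4) : ℝ) (5/4)) := measure_mono hsub
        _ = ENNReal.ofReal (5/4 - -(1/4)) := Real.volume_Icc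
        _ = ENNReal.ofReal (3/2) := by norm_num
    have hBmeas : MeasurableSet B := hAmeas.preimage (measurable_add_const x)
    have hinter : volume (A ∩ B) ≠ 0 := by
      intro h0
      have := measure_union_add_inter (μ := volume) A hBmeas
      rw [h0, add_zero, hBvol] at this
      have h1 : ENNReal.ofReal (7/8) + ENNReal.ofReal (7/8) < volume A + volume A :=
        ENNReal.add_lt_add hn hn
      rw [← this] at h1
      have h2 : ENNReal.ofReal (3/2) < ENNReal.ofReal (7/8) + ENNReal.ofReal (7/8) := by
        rw [← ENNReal.ofReal_add (by norm_num) (by norm_num)]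
        exact ENNReal.ofReal_lt_ofReal_iff_of_nonneg (by norm_num) |>.mpr (by norm_num)
      exact absurd (lt_of_lt_of_le (lt_trans h2 h1) hABvol) (lt_irrefl _)
    obtain ⟨a, haA, haB⟩ := nonempty_of_measure_ne_zero hinter
    have key : h x = h (a + x) - h a := by rw [hadd a x]; ring
    rw [key]
    have h1 : |h (a + x)| ≤ n := haB.2
    have h2 : |h a| ≤ n := haA.2
    calc |h (a + x) - h a| ≤ |h (a + x)| + |h a| := abs_sub _ _
      _ ≤ n + n := add_le_add h1 h2
      _ = 2 * n := by ring
  -- Step 2: continuity at 0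
  have hzero : h 0 = 0 := by
    have := hadd 0 0; simpa using this
  have hcont0 : Tendsto h (𝓝 0) (𝓝 0) := by
    rw [Metric.tendsto_nhds_nhds]
    intro ε hε
    obtain ⟨m, hm⟩ := exists_nat_gt (2 * n / ε)
    have hmpos : (0:ℝ) < m := lt_of_le_of_lt (div_nonneg (by positivity) hε.le) hm
    refine ⟨1 / (4 * m), by positivity, fun {y} hy => ?_⟩
    simp only [Real.dist_eq, sub_zero] at hy ⊢
    have hmy : |(m : ℝ) * y| ≤ 1/4 := by
      rw [abs_mul, abs_of_nonneg (by positivity : (0:ℝ) ≤ (m:ℝ))]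
      calc (m : ℝ) * |y| ≤ m * (1 / (4 * m)) := by
            apply mul_le_mul_of_nonneg_left hy.le hmpos.le
        _ = 1/4 := by field_simp
    have hsm : h ((m : ℝ) * y) = m * h y := by
      have := map_nsmul H m y
      simpa [hH', nsmul_eq_mul] using this
    have : (m : ℝ) * |h y| ≤ 2 * n := by
      rw [← abs_of_nonneg (by positivity : (0:ℝ) ≤ (m:ℝ)), ← abs_mul, ← hsm]
      exact hbound _ hmy
    have hbd : |h y| ≤ 2 * n / m := by
      rw [le_div_iff₀ hmpos]; linarith [this]
    calc |h y| ≤ 2 * n / m := hbd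
      _ < ε := by rw [div_lt_iff₀ hmpos]; rw [div_lt_iff₀ hε] at hm; linarith [hm]
  have hcont : Continuous h := by
    rw [continuous_iff_continuousAt]
    intro x
    have heq : h = fun y => h x + h (y - x) := by
      funext y
      have := hadd x (y - x)
      rw [add_sub_cancel] at this
      rw [this]
    have h1 : Tendsto (fun y : ℝ => y - x) (𝓝 x) (𝓝 0) := by
      have hc : Continuous (fun y : ℝ => y - x) := continuous_id.sub continuous_const
      have := hc.tendsto x
      simpa using this
    have key : Tendsto (fun y => h x + h (y - x)) (𝓝 x) (𝓝 (h x + 0)) :=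
      tendsto_const_nhds.add (hcont0.comp h1)
    rw [add_zero] at key
    exact key.congr (fun y => (congrFun heq y).symm)
  intro x
  have := map_real_smul H hcont x 1
  simp only [smul_eq_mul, mul_one, hH'] at this
  rw [this]; ring

end Cauchy


/-- The Euclidean norm of a vector in `ℝ^d` (as a pi type). -/
noncomputable def euclNorm {d : ℕ} (x : Fin d → ℝ) : ℝ :=
  Real.sqrt (∑ i, x i ^ 2)

/-- Let `f : (0,∞)^d → (0,∞)` be measurable and radially regularly
varying (with limit function `φ`, `f(tx)/f(te) → φ(x) > 0`, where
`e = (d^{-1/2},...,d^{-1/2})`). Then there exist `ρ ∈ ℝ` and a radially slowly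
varying `L : (0,∞)^d → (0,∞)` (with some limit function `λ` on the unit sphere
satisfying `λ(a_e) = 1`) such that `f(x) = ‖x‖^ρ · L(x)` on `(0,∞)^d`. -/
theorem stmt_5 {d : ℕ} (hd : 0 < d) (e : Fin d → ℝ)
    (he : e = fun _ => (d : ℝ) ^ (-(1 : ℝ) / 2))
    (f φ : (Fin d → ℝ) → ℝ)
    (hf : ∀ x : Fin d → ℝ, (∀ i, 0 < x i) → 0 < f x)
    (hfmeas : Measurable f)
    (hφpos : ∀ x : Fin d → ℝ, (∀ i, 0 < x i) → 0 < φ x)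
    (hlim : ∀ x : Fin d → ℝ, (∀ i, 0 < x i) →
      Tendsto (fun t : ℝ => f (t • x) / f (t • e)) atTop (𝓝 (φ x))) :
    ∃ (ρ : ℝ) (L lam : (Fin d → ℝ) → ℝ),
      (∀ x : Fin d → ℝ, (∀ i, 0 < x i) → 0 < L x) ∧
      lam ((euclNorm e)⁻¹ • e) = 1 ∧
      (∀ x : Fin d → ℝ, (∀ i, 0 < x i) →
        Tendsto (fun t : ℝ => L (t • x) / L (t • e)) atTop
          (𝓝 (lam ((euclNorm x)⁻¹ • x)))) ∧
      (∀ x : Fin d → ℝ, (∀ i, 0 < x i) → f x = euclNorm x ^ ρ * L x) := by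
  have hdpos : (0:ℝ) < d := Nat.cast_pos.mpr hd
  have hepos : ∀ i, 0 < e i := by
    rw [he]; intro i; exact Real.rpow_pos_of_pos hdpos _
  have hnorm_e : euclNorm e = 1 := by
    unfold euclNorm
    rw [he]
    have hcoord : ((d:ℝ) ^ (-(1:ℝ)/2)) ^ 2 = (d:ℝ)⁻¹ := by
      rw [← Real.rpow_natCast ((d:ℝ) ^ (-(1:ℝ)/2)) 2, ← Real.rpow_mul hdpos.le]
      norm_num
      exact Real.rpow_neg_one _
    simp only [hcoord]
    rw [Finset.sum_const, Finset.card_univ, Fintype.card_fin, nsmul_eq_mul,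
      mul_inv_cancel₀ hdpos.ne']
    exact Real.sqrt_one
  have hFinNe : Nonempty (Fin d) := ⟨⟨0, hd⟩⟩
  have normpos : ∀ x : Fin d → ℝ, (∀ i, 0 < x i) → 0 < euclNorm x := by
    intro x hx
    unfold euclNorm
    apply Real.sqrt_pos.mpr
    apply Finset.sum_pos (fun i _ => pow_pos (hx i) 2) Finset.univ_nonempty
  have hhomog : ∀ (t : ℝ), 0 ≤ t → ∀ x : Fin d → ℝ, euclNorm (t • x) = t * euclNorm x := by
    intro t ht x
    unfold euclNorm
    have hc : ∀ i : Fin d, (t • x) i ^ 2 = t ^ 2 * x i ^ 2 := by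
      intro i; simp only [Pi.smul_apply, smul_eq_mul]; ring
    rw [Finset.sum_congr rfl (fun i _ => hc i), ← Finset.mul_sum,
      Real.sqrt_mul (sq_nonneg t), Real.sqrt_sq ht]
  have hspos : ∀ (t : ℝ), 0 < t → ∀ x : Fin d → ℝ, (∀ i, 0 < x i) → (∀ i, 0 < (t • x) i) :=
    fun t ht x hx i => mul_pos ht (hx i)
  -- φ e = 1
  have hφe : φ e = 1 := by
    have h1 := hlim e hepos
    have h2 : Tendsto (fun t : ℝ => f (t • e) / f (t • e)) atTop (𝓝 1) := by
      apply Tendsto.congr' _ tendsto_const_nhds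
      filter_upwards [eventually_gt_atTop 0] with t ht
      exact (div_self (hf _ (hspos t ht e hepos)).ne').symm
    exact tendsto_nhds_unique h1 h2
  -- multiplicativity in the radial direction
  have hmul : ∀ s : ℝ, 0 < s → ∀ x : Fin d → ℝ, (∀ i, 0 < x i) →
      φ (s • x) = φ x * φ (s • e) := by
    intro s hs x hx
    have hsx := hspos s hs x hx
    have hse := hspos s hs e hepos
    have lim1 : Tendsto (fun t : ℝ => f (t • (s • x)) / f (t • e)) atTop (𝓝 (φ (s • x))) :=
      hlim _ hsx
    have hts : Tendsto (fun t : ℝ => t * s) atTop atTop := tendsto_id.atTop_mul_const hs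
    have lim2a : Tendsto (fun t : ℝ => f ((t*s) • x) / f ((t*s) • e)) atTop (𝓝 (φ x)) :=
      (hlim x hx).comp hts
    have lim2b : Tendsto (fun t : ℝ => f ((t*s) • e) / f (t • e)) atTop (𝓝 (φ (s • e))) := by
      apply (hlim (s • e) hse).congr
      intro t; rw [smul_smul]
    have lim2 := lim2a.mul lim2b
    have heq : ∀ᶠ t in atTop, (f ((t*s) • x) / f ((t*s) • e)) * (f ((t*s) • e) / f (t • e))
        = f (t • (s • x)) / f (t • e) := by
      filter_upwards [eventually_gt_atTop 0] with t ht
      have hne : f ((t*s) • e) ≠ 0 := (hf _ (hspos _ (mul_pos ht hs) e hepos)).ne'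
      rw [smul_smul]
      field_simp
    exact tendsto_nhds_unique lim1 (lim2.congr' heq)
  -- the one-dimensional section along e
  set g : ℝ → ℝ := fun u => Real.log (f (Real.exp u • e)) with hgdef
  have hgmeas : Measurable g := by
    apply Real.measurable_log.comp
    apply hfmeas.comp
    exact measurable_pi_lambda _ (fun i => Real.measurable_exp.mul_const (e i))
  set h : ℝ → ℝ := fun u => Real.log (φ (Real.exp u • e)) with hhdef
  have hepos' : ∀ u : ℝ, ∀ i, 0 < (Real.exp u • e) i :=
    fun u => hspos _ (Real.exp_pos u) e hepos
  have hmeas_h : Measurable h := by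
    apply measurable_of_tendsto_metrizable
      (f := fun (n : ℕ) (u : ℝ) => g (u + n) - g n)
    · intro n
      exact (hgmeas.comp (measurable_id.add_const _)).sub measurable_const
    · rw [tendsto_pi_nhds]
      intro u
      have l1 := hlim _ (hepos' u)
      have l2 : Tendsto (fun t : ℝ => Real.log (f (t • (Real.exp u • e)) / f (t • e)))
          atTop (𝓝 (h u)) :=
        ((Real.continuousAt_log (hφpos _ (hepos' u)).ne').tendsto).comp l1
      have l3 : Tendsto (fun n : ℕ => Real.exp (n : ℝ)) atTop atTop :=
        Real.tendsto_exp_atTop.comp tendsto_natCast_atTop_atTop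
      apply (l2.comp l3).congr
      intro n
      show Real.log (f (Real.exp (n:ℝ) • (Real.exp u • e)) / f (Real.exp (n:ℝ) • e))
          = g (u + n) - g n
      rw [smul_smul, ← Real.exp_add,
        Real.log_div (hf _ (hspos _ (Real.exp_pos _) e hepos)).ne'
          (hf _ (hspos _ (Real.exp_pos _) e hepos)).ne']
      rw [add_comm (n:ℝ) u]
  have haddh : ∀ u v, h (u + v) = h u + h v := by
    intro u v
    have hkey := hmul (Real.exp u) (Real.exp_pos u) (Real.exp v • e) (hepos' v)
    rw [smul_smul, ← Real.exp_add] at hkey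
    show Real.log (φ (Real.exp (u + v) • e)) = _
    rw [hkey, Real.log_mul (hφpos _ (hepos' v)).ne' (hφpos _ (hepos' u)).ne']
    exact add_comm _ _
  have hlin := cauchy_measurable_linear h hmeas_h haddh
  set ρ : ℝ := h 1 with hρdef
  have hpow : ∀ s : ℝ, 0 < s → φ (s • e) = s ^ ρ := by
    intro s hs
    have h1 := hlin (Real.log s)
    simp only [hhdef] at h1
    rw [Real.exp_log hs] at h1
    have h3 : Real.log (φ (s • e)) = ρ * Real.log s := h1
    have hφse := hφpos _ (hspos s hs e hepos)
    rw [Real.rpow_def_of_pos hs, ← Real.exp_log hφse, h3, mul_comm]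
  refine ⟨ρ, fun x => f x / euclNorm x ^ ρ, φ, ?_, ?_, ?_, ?_⟩
  · intro x hx
    exact div_pos (hf x hx) (Real.rpow_pos_of_pos (normpos x hx) ρ)
  · rw [hnorm_e, inv_one, one_smul]; exact hφe
  · intro x hx
    set r : ℝ := euclNorm x with hr
    have hrpos : 0 < r := normpos x hx
    set a : Fin d → ℝ := r⁻¹ • x with ha
    have hapos : ∀ i, 0 < a i := hspos _ (inv_pos.mpr hrpos) x hx
    have hxa : r • a = x := by
      rw [ha, smul_smul, mul_inv_cancel₀ hrpos.ne', one_smul]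
    have hφx : φ x = φ a * r ^ ρ := by
      conv_lhs => rw [← hxa]
      rw [hmul r hrpos a hapos, hpow r hrpos]
    have key : Tendsto (fun t : ℝ => (f (t • x) / f (t • e)) / r ^ ρ) atTop
        (𝓝 (φ x / r ^ ρ)) := (hlim x hx).div_const _
    have hval : φ x / r ^ ρ = φ a := by
      rw [hφx]
      field_simp
    rw [← hval]
    apply key.congr'
    filter_upwards [eventually_gt_atTop 0] with t ht
    show f (t • x) / f (t • e) / r ^ ρ
        = f (t • x) / euclNorm (t • x) ^ ρ / (f (t • e) / euclNorm (t • e) ^ ρ)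
    rw [hhomog t ht.le x, hhomog t ht.le e, hnorm_e, mul_one, ← hr,
      Real.mul_rpow ht.le hrpos.le]
    have hne1 : f (t • e) ≠ 0 := (hf _ (hspos t ht e hepos)).ne'
    have hne2 : t ^ ρ ≠ 0 := (Real.rpow_pos_of_pos ht ρ).ne'
    have hne3 : r ^ ρ ≠ 0 := (Real.rpow_pos_of_pos hrpos ρ).ne'
    field_simp
  · intro x hx
    rw [mul_comm, div_mul_cancel₀ _ (Real.rpow_pos_of_pos (normpos x hx) ρ).ne']
end

section
/- Let L : (0,∞)^d → (0,∞) be a radially slowly varying function with limit function λ, and assume λ is strictly positive. Let l : (0,∞) → (0,∞) be any univariate slowly varying function, and define K(x) = L(x)/(l(‖x‖)·λ(x/‖x‖)) for x ∈ (0,∞)^d. Then K(tx)/K(te) → 1 as t → ∞ for every x ∈ (0,∞)^d; consequently L admits the factorization L(x) = K(x)·l(r_x)·λ(a_x), where K is radially slowly varying with identically-one limit function. -/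
open Filter Topology

/-!
Along the ray `t ↦ t • x` the direction `a_{tx} = a_x` is fixed and `‖t • x‖ = t ‖x‖`, so
`K(tx)/K(te) = (L(tx)/L(te)) · (l(t‖x‖)/l(t‖e‖))⁻¹ · (λ(a_x)/λ(a_e))⁻¹`.
The first factor tends to `λ(a_x)`, the second to `1` because `l` is slowly varying, and
`λ(a_e) = 1`, so the product tends to `1`.
-/

lemma euclNorm_pos {d : ℕ} (hd : 0 < d) {x : Fin d → ℝ} (hx : ∀ i, 0 < x i) :
    0 < euclNorm x :=
  Real.sqrt_pos.mpr <|
    Finset.sum_pos (fun i _ => pow_pos (hx i) 2) ⟨⟨0, hd⟩, Finset.mem_univ _⟩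

lemma euclNorm_smul {d : ℕ} {t : ℝ} (ht : 0 ≤ t) (x : Fin d → ℝ) :
    euclNorm (t • x) = t * euclNorm x := by
  have h : ∑ i, (t • x) i ^ 2 = t ^ 2 * ∑ i, x i ^ 2 := by
    simp only [Pi.smul_apply, smul_eq_mul, mul_pow, Finset.mul_sum]
  rw [euclNorm, euclNorm, h, Real.sqrt_mul (sq_nonneg t), Real.sqrt_sq ht]

lemma inv_euclNorm_smul_smul {d : ℕ} {t : ℝ} (ht : 0 < t) (x : Fin d → ℝ) :
    (euclNorm (t • x))⁻¹ • (t • x) = (euclNorm x)⁻¹ • x := by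
  rw [euclNorm_smul ht.le, smul_smul, mul_inv, mul_comm t⁻¹, mul_assoc, inv_mul_cancel₀ ht.ne',
    mul_one]

lemma tendsto_div_comp_mul_of_slowlyVarying {l : ℝ → ℝ}
    (hl : ∀ y, 0 < y → Tendsto (fun t => l (t * y) / l t) atTop (𝓝 1))
    (hl₀ : ∀ᶠ t in atTop, l t ≠ 0) {y z : ℝ} (hy : 0 < y) (hz : 0 < z) :
    Tendsto (fun t => l (t * y) / l (t * z)) atTop (𝓝 1) := by
  have h := (hl y hy).div (hl z hz) one_ne_zero
  rw [div_one] at h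
  refine h.congr' ?_
  filter_upwards [hl₀] with t ht
  exact div_div_div_cancel_right₀ ht _ _

theorem stmt_6_general {d : ℕ} (hd : 0 < d) (e : Fin d → ℝ)
    (he : e = fun _ => (d : ℝ) ^ (-(1 : ℝ) / 2))
    (L lam : (Fin d → ℝ) → ℝ) (l : ℝ → ℝ)
    (hlame : lam ((euclNorm e)⁻¹ • e) = 1)
    (hlampos : ∀ x : Fin d → ℝ, (∀ i, 0 < x i) → 0 < lam ((euclNorm x)⁻¹ • x))
    (hLlim : ∀ x : Fin d → ℝ, (∀ i, 0 < x i) →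
      Tendsto (fun t : ℝ => L (t • x) / L (t • e)) atTop
        (𝓝 (lam ((euclNorm x)⁻¹ • x))))
    (hlpos : ∀ y : ℝ, 0 < y → 0 < l y)
    (hlsv : ∀ y : ℝ, 0 < y →
      Tendsto (fun t : ℝ => l (t * y) / l t) atTop (𝓝 1))
    (K : (Fin d → ℝ) → ℝ)
    (hK : ∀ x, K x = L x / (l (euclNorm x) * lam ((euclNorm x)⁻¹ • x))) :
    (∀ x : Fin d → ℝ, (∀ i, 0 < x i) →
      Tendsto (fun t : ℝ => K (t • x) / K (t • e)) atTop (𝓝 1)) ∧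
    (∀ x : Fin d → ℝ, (∀ i, 0 < x i) →
      L x = K x * l (euclNorm x) * lam ((euclNorm x)⁻¹ • x)) := by
  refine ⟨fun x hx => ?_, fun x hx => ?_⟩
  · have hne : 0 < euclNorm e := euclNorm_pos hd fun _ => by rw [he]; positivity
    have hl : Tendsto (fun t => (l (t * euclNorm x) / l (t * euclNorm e))⁻¹) atTop (𝓝 1) := by
      simpa using ((tendsto_div_comp_mul_of_slowlyVarying hlsv
        ((eventually_gt_atTop 0).mono fun t ht => (hlpos t ht).ne')
        (euclNorm_pos hd hx) hne).inv₀ one_ne_zero)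
    have hlim := ((hLlim x hx).mul hl).mul (tendsto_const_nhds (x := (lam ((euclNorm x)⁻¹ • x))⁻¹))
    rw [mul_one, mul_inv_cancel₀ (hlampos x hx).ne'] at hlim
    refine hlim.congr' ?_
    filter_upwards [eventually_gt_atTop 0] with t ht
    rw [hK, hK, inv_euclNorm_smul_smul ht, inv_euclNorm_smul_smul ht, hlame,
      euclNorm_smul ht.le, euclNorm_smul ht.le]
    ring
  · have hlam := (hlampos x hx).ne'
    have hl := (hlpos _ (euclNorm_pos hd hx)).ne'
    rw [hK x, mul_assoc, div_mul_cancel₀ _ (mul_ne_zero hl hlam)]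

/-- Let `L : (0,∞)^d → (0,∞)` be radially slowly varying with
strictly positive limit function `λ` (`L(tx)/L(te) → λ(a_x)`, `λ(a_e) = 1`,
with `e = (d^{-1/2},...,d^{-1/2})`, `a_x = x/‖x‖`), and let `l` be any univariate
slowly varying function. Define `K(x) = L(x)/(l(‖x‖)·λ(x/‖x‖))`. Then
`K(tx)/K(te) → 1` as `t → ∞` for every `x ∈ (0,∞)^d`, and `L` factorizes as
`L(x) = K(x)·l(r_x)·λ(a_x)`. -/
theorem stmt_6 {d : ℕ} (hd : 0 < d) (e : Fin d → ℝ)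
    (he : e = fun _ => (d : ℝ) ^ (-(1 : ℝ) / 2))
    (L lam : (Fin d → ℝ) → ℝ) (l : ℝ → ℝ)
    (hLpos : ∀ x : Fin d → ℝ, (∀ i, 0 < x i) → 0 < L x)
    (hlame : lam ((euclNorm e)⁻¹ • e) = 1)
    (hlampos : ∀ x : Fin d → ℝ, (∀ i, 0 < x i) → 0 < lam ((euclNorm x)⁻¹ • x))
    (hLlim : ∀ x : Fin d → ℝ, (∀ i, 0 < x i) →
      Tendsto (fun t : ℝ => L (t • x) / L (t • e)) atTop
        (𝓝 (lam ((euclNorm x)⁻¹ • x))))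
    (hlpos : ∀ y : ℝ, 0 < y → 0 < l y)
    (hlsv : ∀ y : ℝ, 0 < y →
      Tendsto (fun t : ℝ => l (t * y) / l t) atTop (𝓝 1))
    (K : (Fin d → ℝ) → ℝ)
    (hK : ∀ x, K x = L x / (l (euclNorm x) * lam ((euclNorm x)⁻¹ • x))) :
    (∀ x : Fin d → ℝ, (∀ i, 0 < x i) →
      Tendsto (fun t : ℝ => K (t • x) / K (t • e)) atTop (𝓝 1)) ∧
    (∀ x : Fin d → ℝ, (∀ i, 0 < x i) →
      L x = K x * l (euclNorm x) * lam ((euclNorm x)⁻¹ • x)) :=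
  stmt_6_general hd e he L lam l hlame hlampos hLlim hlpos hlsv K hK
end

section
/- Let X = (X₁,...,X_m) be a non-degenerate multi-self-similar ℝ^m-valued random field on T = [0,∞)^d with scaling function f = (f₁,...,f_m) : (0,∞)^d → (0,∞)^m. Then there exist nonnegative real numbers H_i^{(j)} (1 ≤ i ≤ d, 1 ≤ j ≤ m) such that f_j(a) = ∏_{i=1}^d a_i^{H_i^{(j)}} for every a ∈ (0,∞)^d and every j. -/
/-!
Multi-self-similarity says that `X_j(a·b)` and `f_j(a) X_j(b)` have the same law, so the
transform `G_Y(c) = 𝔼[exp (-(c Y)²)]` satisfies `G_{X_j(a·b)}(c) = G_{X_j(b)}(c f_j(a))`.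
Non-degeneracy makes `c ↦ G_{X_j(1)}(c)` strictly decreasing on `[0, ∞)`, hence injective;
computing `G_{X_j(a·b)}(1)` in two ways then gives `f_j(a·b) = f_j(a) f_j(b)`. Stochastic
continuity and dominated convergence make `G` jointly continuous in `(c, t)`, so `f_j` is
continuous, and a continuous multiplicative function on `(0,∞)^d` is `a ↦ ∏ aᵢ^{Hᵢ}`.
Finally `Hᵢ < 0` is impossible: for `a`, `b` equal to `1` off the `i`-th coordinate and to `n`,
`1/n` there, `G_{X_j(1)}(1) = G_{X_j(b)}(f_j(a)) → G_{X_j(b₀)}(0) = 1 = G_{X_j(1)}(0)`.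
-/

open MeasureTheory Filter Topology ProbabilityTheory Set

theorem MeasureTheory.TendstoInMeasure.eval {α ι κ : Type*} [MeasurableSpace α] {μ : Measure α}
    {l : Filter ι} {E : κ → Type*} [∀ k, PseudoEMetricSpace (E k)] [Fintype κ]
    {f : ι → α → ∀ k, E k} {g : α → ∀ k, E k} (h : TendstoInMeasure μ f l g) (k : κ) :
    TendstoInMeasure μ (fun n ω => f n ω k) l (fun ω => g ω k) := fun ε hε =>
  tendsto_of_tendsto_of_tendsto_of_le_of_le tendsto_const_nhds (h ε hε) (fun _ => zero_le)
    fun _ => measure_mono fun _ hω => le_trans hω (edist_le_pi_edist _ _ k)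

lemma StrictAntiOn.tendsto_of_tendsto_comp {α β γ : Type*} [LinearOrder α] [TopologicalSpace α]
    [OrderTopology α] [LinearOrder β] [TopologicalSpace β] [OrderTopology β] {ψ : α → β}
    {x₀ : α} (hψ : StrictAntiOn ψ (Ici x₀)) {l : Filter γ} {c : γ → α} {c₀ : α}
    (hc : ∀ n, x₀ ≤ c n) (hc₀ : x₀ ≤ c₀) (h : Tendsto (ψ ∘ c) l (𝓝 (ψ c₀))) :
    Tendsto c l (𝓝 c₀) := by
  refine tendsto_order.2 ⟨fun b hb => ?_, fun b hb => ?_⟩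
  · rcases lt_or_ge b x₀ with hbx | hbx
    · exact Eventually.of_forall fun n => hbx.trans_le (hc n)
    · filter_upwards [h.eventually_lt_const ((hψ.lt_iff_gt hc₀ hbx).2 hb)] with n hn
      exact (hψ.lt_iff_gt (hc n) hbx).1 hn
  · have hbx : x₀ ≤ b := hc₀.trans hb.le
    filter_upwards [h.eventually_const_lt ((hψ.lt_iff_gt hbx hc₀).2 hb)] with n hn
    exact (hψ.lt_iff_gt hbx (hc n)).1 hn

section GaussianTransform

variable {Ω : Type*} [MeasurableSpace Ω] {P : Measure Ω}

noncomputable def gaussianTransform (P : Measure Ω) (Y : Ω → ℝ) (c : ℝ) : ℝ :=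
  ∫ ω, Real.exp (-(c * Y ω) ^ 2) ∂P

lemma continuous_exp_neg_sq_mul (c : ℝ) : Continuous fun y : ℝ => Real.exp (-(c * y) ^ 2) := by
  fun_prop

lemma norm_exp_neg_sq_le_one (x : ℝ) : ‖Real.exp (-x ^ 2)‖ ≤ 1 := by
  rw [Real.norm_eq_abs, Real.abs_exp, Real.exp_le_one_iff, neg_nonpos]
  exact sq_nonneg x

lemma integrable_exp_neg_sq_mul [IsFiniteMeasure P] {Y : Ω → ℝ} (hY : AEStronglyMeasurable Y P)
    (c : ℝ) : Integrable (fun ω => Real.exp (-(c * Y ω) ^ 2)) P :=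
  .of_bound ((continuous_exp_neg_sq_mul c).comp_aestronglyMeasurable hY) 1
    (ae_of_all _ fun _ => norm_exp_neg_sq_le_one _)

lemma gaussianTransform_zero [IsProbabilityMeasure P] (Y : Ω → ℝ) :
    gaussianTransform P Y 0 = 1 := by
  simp [gaussianTransform]

lemma gaussianTransform_const_mul (Y : Ω → ℝ) (a c : ℝ) :
    gaussianTransform P (fun ω => a * Y ω) c = gaussianTransform P Y (c * a) := by
  simp only [gaussianTransform, mul_assoc]

lemma ProbabilityTheory.IdentDistrib.gaussianTransform_eq {Ω' : Type*} [MeasurableSpace Ω']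
    {P' : Measure Ω'} {Y : Ω → ℝ} {Y' : Ω' → ℝ} (h : IdentDistrib Y Y' P P') :
    gaussianTransform P Y = gaussianTransform P' Y' :=
  funext fun c => (h.comp (continuous_exp_neg_sq_mul c).measurable).integral_eq

lemma gaussianTransform_strictAntiOn [IsFiniteMeasure P] {Y : Ω → ℝ}
    (hY : AEStronglyMeasurable Y P) (hY0 : ¬ Y =ᵐ[P] 0) :
    StrictAntiOn (gaussianTransform P Y) (Ici 0) := by
  intro c hc c' hc' hcc'
  have hle : ∀ y, Real.exp (-(c' * y) ^ 2) ≤ Real.exp (-(c * y) ^ 2) := fun y => by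
    rw [Real.exp_le_exp, neg_le_neg_iff, mul_pow, mul_pow]
    gcongr
  have hlt : ∀ y, y ≠ 0 → Real.exp (-(c' * y) ^ 2) < Real.exp (-(c * y) ^ 2) := fun y hy => by
    rw [Real.exp_lt_exp, neg_lt_neg_iff, mul_pow, mul_pow]
    gcongr
  rw [gaussianTransform, gaussianTransform, ← sub_pos, ← integral_sub
    (integrable_exp_neg_sq_mul hY c) (integrable_exp_neg_sq_mul hY c'),
    integral_pos_iff_support_of_nonneg_ae (ae_of_all _ fun ω => sub_nonneg.2 (hle _))
      ((integrable_exp_neg_sq_mul hY c).sub (integrable_exp_neg_sq_mul hY c'))]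
  rw [EventuallyEq, ae_iff] at hY0
  exact pos_iff_ne_zero.2 (mt (measure_mono_null fun ω hω => (sub_pos.2 (hlt _ hω)).ne') hY0)

lemma tendsto_gaussianTransform [IsFiniteMeasure P] {Y : ℕ → Ω → ℝ} {Y₀ : Ω → ℝ} {c : ℕ → ℝ}
    {c₀ : ℝ} (hY : ∀ n, AEStronglyMeasurable (Y n) P) (hYY₀ : TendstoInMeasure P Y atTop Y₀)
    (hc : Tendsto c atTop (𝓝 c₀)) :
    Tendsto (fun n => gaussianTransform P (Y n) (c n)) atTop (𝓝 (gaussianTransform P Y₀ c₀)) := by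
  refine tendsto_of_subseq_tendsto fun ns hns => ?_
  obtain ⟨ms, hms, hae⟩ := (hYY₀.comp hns).exists_seq_tendsto_ae
  refine ⟨ms, tendsto_integral_of_dominated_convergence (fun _ => 1)
    (fun _ => (integrable_exp_neg_sq_mul (hY _) _).1) (integrable_const 1)
    (fun _ => ae_of_all _ fun _ => norm_exp_neg_sq_le_one _) ?_⟩
  filter_upwards [hae] with ω hω
  have hc' := hc.comp (hns.comp hms.tendsto_atTop)
  exact ((Real.continuous_exp.comp (continuous_pow 2).neg).tendsto _).comp (hc'.mul hω)

end GaussianTransform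

lemma eq_rpow_of_mul_of_continuousOn {g : ℝ → ℝ}
    (hmul : ∀ s t, 0 < s → 0 < t → g (s * t) = g s * g t) (hpos : ∀ s, 0 < s → 0 < g s)
    (hcont : ContinuousOn g (Ioi 0)) {s : ℝ} (hs : 0 < s) :
    g s = s ^ Real.log (g (Real.exp 1)) := by
  let L : ℝ →+ ℝ := .mk' (fun x => Real.log (g (Real.exp x))) fun x y => by
    rw [Real.exp_add, hmul _ _ (Real.exp_pos x) (Real.exp_pos y),
      Real.log_mul (hpos _ (Real.exp_pos x)).ne' (hpos _ (Real.exp_pos y)).ne']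
  have hL : Continuous L :=
    (hcont.log fun x hx => (hpos x hx).ne').comp_continuous Real.continuous_exp Real.exp_pos
  have hlin : L (Real.log s) = Real.log s * L 1 := by
    simpa using map_real_smul L hL (Real.log s) 1
  rw [Real.rpow_def_of_pos hs, ← Real.exp_log (hpos s hs)]
  simpa [L, Real.exp_log hs] using hlin

lemma mulSingle_apply_pos {ι : Type*} [DecidableEq ι] {s : ℝ} (hs : 0 < s) (i k : ι) :
    0 < (Pi.mulSingle i s : ι → ℝ) k := by
  by_cases h : k = i <;> simp [h, hs]

lemma mulSingle_nonneg {ι : Type*} [DecidableEq ι] {s : ℝ} (hs : 0 ≤ s) (i : ι) :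
    0 ≤ (Pi.mulSingle i s : ι → ℝ) := fun k => by
  by_cases h : k = i <;> simp [h, hs]

section MultiplicativeOnOrthant

variable {ι : Type*} {F : (ι → ℝ) → ℝ}

lemma map_mulSingle_eq_rpow [DecidableEq ι]
    (hmul : ∀ a b, (∀ i, 0 < a i) → (∀ i, 0 < b i) → F (a * b) = F a * F b)
    (hpos : ∀ a, (∀ i, 0 < a i) → 0 < F a) (hcont : ContinuousOn F {a | ∀ i, 0 < a i})
    (i : ι) {s : ℝ} (hs : 0 < s) :
    F (Pi.mulSingle i s) = s ^ Real.log (F (Pi.mulSingle i (Real.exp 1))) := by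
  refine eq_rpow_of_mul_of_continuousOn (g := fun s => F (Pi.mulSingle i s))
    (fun s t hs ht => ?_) (fun s hs => hpos _ (mulSingle_apply_pos hs i)) ?_ hs
  · simp only [Pi.mulSingle_mul]
    exact hmul _ _ (mulSingle_apply_pos hs i) (mulSingle_apply_pos ht i)
  · exact hcont.comp (continuous_mulSingle (A := fun _ : ι => ℝ) i).continuousOn
      fun s hs => mulSingle_apply_pos hs i

lemma map_prod_of_mul (hmul : ∀ a b, (∀ i, 0 < a i) → (∀ i, 0 < b i) → F (a * b) = F a * F b)
    (hpos : ∀ a, (∀ i, 0 < a i) → 0 < F a) {κ : Type*} (s : Finset κ) {b : κ → ι → ℝ}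
    (hb : ∀ k i, 0 < b k i) : F (∏ k ∈ s, b k) = ∏ k ∈ s, F (b k) := by
  classical
  induction s using Finset.induction_on with
  | empty =>
    have h := hmul 1 1 (fun _ => one_pos) (fun _ => one_pos)
    rw [mul_one] at h
    simpa using (mul_eq_left₀ (hpos 1 fun _ => one_pos).ne').1 h.symm
  | insert k s hk ih =>
    rw [Finset.prod_insert hk, Finset.prod_insert hk, hmul _ _ (hb k) _, ih]
    intro i
    rw [Finset.prod_apply]
    exact Finset.prod_pos fun k _ => hb k i

lemma eq_prod_rpow_of_mul_of_continuousOn [Fintype ι] [DecidableEq ι]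
    (hmul : ∀ a b, (∀ i, 0 < a i) → (∀ i, 0 < b i) → F (a * b) = F a * F b)
    (hpos : ∀ a, (∀ i, 0 < a i) → 0 < F a) (hcont : ContinuousOn F {a | ∀ i, 0 < a i})
    {a : ι → ℝ} (ha : ∀ i, 0 < a i) :
    F a = ∏ i, a i ^ Real.log (F (Pi.mulSingle i (Real.exp 1))) :=
  calc F a = F (∏ i, Pi.mulSingle i (a i)) := by rw [Finset.univ_prod_mulSingle]
    _ = ∏ i, F (Pi.mulSingle i (a i)) :=
      map_prod_of_mul hmul hpos _ fun i => mulSingle_apply_pos (ha i) i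
    _ = _ := Finset.prod_congr rfl fun i _ => map_mulSingle_eq_rpow hmul hpos hcont i (ha i)

end MultiplicativeOnOrthant

section SelfSimilar

variable {ι Ω : Type*} [MeasurableSpace Ω] {P : Measure Ω} {Y : (ι → ℝ) → Ω → ℝ}
  {F : (ι → ℝ) → ℝ}

def StochasticallyContinuousOn {T E : Type*} [TopologicalSpace T] [EDist E]
    (P : Measure Ω) (Y : T → Ω → E) (S : Set T) : Prop :=
  ∀ t ∈ S, ∀ u : ℕ → T, (∀ n, u n ∈ S) → Tendsto u atTop (𝓝 t) →
    TendstoInMeasure P (fun n => Y (u n)) atTop (Y t)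

def IsSelfSimilarWith (P : Measure Ω) (Y : (ι → ℝ) → Ω → ℝ) (F : (ι → ℝ) → ℝ) : Prop :=
  ∀ a b : ι → ℝ, (∀ i, 0 < a i) → 0 ≤ b → IdentDistrib (Y (a * b)) (fun ω => F a * Y b ω) P P

namespace IsSelfSimilarWith

lemma gaussianTransform_mul (h : IsSelfSimilarWith P Y F) {a b : ι → ℝ} (ha : ∀ i, 0 < a i)
    (hb : 0 ≤ b) (c : ℝ) :
    gaussianTransform P (Y (a * b)) c = gaussianTransform P (Y b) (c * F a) := by
  rw [(h a b ha hb).gaussianTransform_eq, gaussianTransform_const_mul]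

lemma gaussianTransform_eq (h : IsSelfSimilarWith P Y F) {a : ι → ℝ} (ha : ∀ i, 0 < a i)
    (c : ℝ) : gaussianTransform P (Y a) c = gaussianTransform P (Y 1) (c * F a) := by
  simpa using h.gaussianTransform_mul ha zero_le_one c

lemma map_mul (h : IsSelfSimilarWith P Y F) (hF : ∀ a, (∀ i, 0 < a i) → 0 < F a)
    (hψ : StrictAntiOn (gaussianTransform P (Y 1)) (Ici 0)) {a b : ι → ℝ} (ha : ∀ i, 0 < a i)
    (hb : ∀ i, 0 < b i) : F (a * b) = F a * F b := by
  have hab : ∀ i, 0 < (a * b) i := fun i => mul_pos (ha i) (hb i)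
  have key : gaussianTransform P (Y 1) (F (a * b)) = gaussianTransform P (Y 1) (F a * F b) := by
    simpa [h.gaussianTransform_eq hab, h.gaussianTransform_eq hb] using
      h.gaussianTransform_mul ha (fun i => (hb i).le) 1
  exact hψ.injOn (hF _ hab).le (mul_pos (hF a ha) (hF b hb)).le key

lemma continuousOn [Fintype ι] [IsFiniteMeasure P] (h : IsSelfSimilarWith P Y F)
    (hF : ∀ a, (∀ i, 0 < a i) → 0 < F a) (hψ : StrictAntiOn (gaussianTransform P (Y 1)) (Ici 0))
    (hY : ∀ t, AEStronglyMeasurable (Y t) P) (hcont : StochasticallyContinuousOn P Y (Ici 0)) :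
    ContinuousOn F {a | ∀ i, 0 < a i} := by
  rw [continuousOn_iff_continuous_domRestrict, continuous_iff_seqContinuous]
  intro a a₀ ha
  have hnonneg : ∀ a : {a : ι → ℝ | ∀ i, 0 < a i}, (a : ι → ℝ) ∈ Ici 0 := fun a i => (a.2 i).le
  have hlim := tendsto_gaussianTransform (fun n => hY _)
    (hcont _ (hnonneg a₀) _ (fun n => hnonneg (a n)) (tendsto_subtype_rng.1 ha))
    (tendsto_const_nhds (x := (1 : ℝ)))
  simp only [h.gaussianTransform_eq a₀.2, fun n => h.gaussianTransform_eq (a n).2, one_mul] at hlim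
  exact hψ.tendsto_of_tendsto_comp (fun n => (hF _ (a n).2).le) (hF _ a₀.2).le hlim

lemma not_tendsto_zero [IsProbabilityMeasure P] (h : IsSelfSimilarWith P Y F)
    (hψ : StrictAntiOn (gaussianTransform P (Y 1)) (Ici 0))
    (hY : ∀ t, AEStronglyMeasurable (Y t) P) (hcont : StochasticallyContinuousOn P Y (Ici 0))
    {a b : ℕ → ι → ℝ} {b₀ : ι → ℝ} (ha : ∀ n i, 0 < a n i) (hb : ∀ n, 0 ≤ b n)
    (hab : ∀ n, a n * b n = 1) (hb₀ : 0 ≤ b₀) (hbb₀ : Tendsto b atTop (𝓝 b₀)) :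
    ¬ Tendsto (fun n => F (a n)) atTop (𝓝 0) := by
  intro hFa
  have hlim := tendsto_gaussianTransform (fun n => hY _) (hcont b₀ hb₀ b hb hbb₀)
    ((tendsto_const_nhds (x := (1 : ℝ))).mul hFa)
  have hconst : ∀ n, gaussianTransform P (Y (b n)) (1 * F (a n)) = gaussianTransform P (Y 1) 1 :=
    fun n => by rw [← h.gaussianTransform_mul (ha n) (hb n), hab n]
  simp only [hconst, mul_zero, gaussianTransform_zero] at hlim
  have := hψ (mem_Ici.2 le_rfl) (mem_Ici.2 zero_le_one) zero_lt_one
  rw [gaussianTransform_zero, tendsto_nhds_unique tendsto_const_nhds hlim] at this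
  exact lt_irrefl _ this

theorem exists_eq_prod_rpow [Fintype ι] [DecidableEq ι] [IsProbabilityMeasure P]
    (h : IsSelfSimilarWith P Y F) (hF : ∀ a, (∀ i, 0 < a i) → 0 < F a)
    (hY : ∀ t, AEStronglyMeasurable (Y t) P) (hcont : StochasticallyContinuousOn P Y (Ici 0))
    (hY1 : ¬ Y 1 =ᵐ[P] 0) :
    ∃ H : ι → ℝ, (∀ i, 0 ≤ H i) ∧ ∀ a, (∀ i, 0 < a i) → F a = ∏ i, a i ^ H i := by
  have hψ := gaussianTransform_strictAntiOn (hY 1) hY1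
  have hmul : ∀ a b : ι → ℝ, (∀ i, 0 < a i) → (∀ i, 0 < b i) → F (a * b) = F a * F b :=
    fun a b ha hb => h.map_mul hF hψ ha hb
  have hFcont := h.continuousOn hF hψ hY hcont
  refine ⟨fun i => Real.log (F (Pi.mulSingle i (Real.exp 1))), fun i => ?_,
    fun a ha => eq_prod_rpow_of_mul_of_continuousOn hmul hF hFcont ha⟩
  by_contra! hneg
  have hn : Tendsto (fun n : ℕ => (n : ℝ) + 1) atTop atTop :=
    tendsto_atTop_add_const_right _ 1 tendsto_natCast_atTop_atTop
  refine h.not_tendsto_zero hψ hY hcont (a := fun n => Pi.mulSingle i ((n : ℝ) + 1))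
    (b := fun n => Pi.mulSingle i ((n : ℝ) + 1)⁻¹) (fun n => mulSingle_apply_pos (by positivity) i)
    (fun n => mulSingle_nonneg (by positivity) i) (fun n => ?_) (mulSingle_nonneg le_rfl i) ?_ ?_
  · rw [← Pi.mulSingle_mul, mul_inv_cancel₀ (by positivity), Pi.mulSingle_one]
  · exact ((continuous_mulSingle i).tendsto 0).comp (tendsto_inv_atTop_zero.comp hn)
  · have := (tendsto_rpow_neg_atTop (neg_pos.2 hneg)).comp hn
    rw [neg_neg] at this
    refine this.congr fun n => ?_
    exact (map_mulSingle_eq_rpow hmul hF hFcont i (by positivity)).symm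

end IsSelfSimilarWith

end SelfSimilar

/-- Let `X = (X₁,...,X_m)` be a non-degenerate multi-self-similar
`ℝ^m`-valued random field on `T = [0,∞)^d` with scaling function
`f = (f₁,...,f_m) : (0,∞)^d → (0,∞)^m`: `X` is stochastically continuous and
`{X(a·t)} =_{f.d.d.} {(f₁(a)X₁(t),...,f_m(a)X_m(t))}` for every `a ∈ (0,∞)^d`.
Then there exist nonnegative reals `H_i^{(j)}` with
`f_j(a) = ∏_{i=1}^d a_i^{H_i^{(j)}}` for every `a ∈ (0,∞)^d` and every `j`. -/
theorem stmt_9 {d m : ℕ} {Ω : Type*} [MeasurableSpace Ω]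
    (P : Measure Ω) [IsProbabilityMeasure P]
    (X : (Fin d → ℝ) → Ω → (Fin m → ℝ))
    (hXmeas : ∀ t, Measurable (X t))
    -- stochastic continuity on `[0,∞)^d`
    (hXcont : ∀ t : Fin d → ℝ, (∀ i, 0 ≤ t i) →
      ∀ u : ℕ → Fin d → ℝ, (∀ n i, 0 ≤ u n i) → Tendsto u atTop (𝓝 t) →
        TendstoInMeasure P (fun n => X (u n)) atTop (X t))
    (f : (Fin d → ℝ) → Fin m → ℝ)
    (hfpos : ∀ a : Fin d → ℝ, (∀ i, 0 < a i) → ∀ j, 0 < f a j)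
    -- multi-self-similarity: equality of finite-dimensional distributions
    (hss : ∀ a : Fin d → ℝ, (∀ i, 0 < a i) →
      ∀ (k : ℕ) (t : Fin k → Fin d → ℝ), (∀ i i', 0 ≤ t i i') →
        Measure.map (fun ω => fun i => X (a * t i) ω) P
          = Measure.map (fun ω => fun i => fun j => f a j * X (t i) ω j) P)
    -- non-degeneracy: `X_j(1,...,1)` is not a.s. constant
    (hnd : ∀ j, ¬ ∃ c : ℝ, ∀ᵐ ω ∂P, X (fun _ => 1) ω j = c) :
    ∃ H : Fin m → Fin d → ℝ, (∀ j i, 0 ≤ H j i) ∧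
      ∀ a : Fin d → ℝ, (∀ i, 0 < a i) → ∀ j, f a j = ∏ i, a i ^ H j i := by
  have hXjmeas (t : Fin d → ℝ) (j : Fin m) : Measurable fun ω => X t ω j :=
    (measurable_pi_apply j).comp (hXmeas t)
  have hmarginal (j : Fin m) : IsSelfSimilarWith P (fun t ω => X t ω j) (fun a => f a j) := by
    intro a b ha hb
    have hlaw : IdentDistrib (fun ω (_ : Fin 1) => X (a * b) ω)
        (fun ω (_ : Fin 1) j => f a j * X b ω j) P P :=
      ⟨(measurable_pi_lambda _ fun _ => hXmeas _).aemeasurable,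
        (measurable_pi_lambda _ fun _ => measurable_pi_lambda _ fun j =>
          (hXjmeas b j).const_mul _).aemeasurable,
        hss a ha 1 (fun _ => b) fun _ => hb⟩
    exact hlaw.comp (measurable_pi_apply j |>.comp (measurable_pi_apply 0))
  choose H hH0 hH using fun j => (hmarginal j).exists_eq_prod_rpow (fun a ha => hfpos a ha j)
    (fun t => (hXjmeas t j).aestronglyMeasurable)
    (fun t ht u hu htu => (hXcont t ht u hu htu).eval j) (fun h0 => hnd j ⟨0, h0⟩)
  exact ⟨H, hH0, fun a ha j => hH j a ha⟩
end

section
/- Let X = (X₁,...,X_m) be a non-degenerate wide-sense multi-self-similar ℝ^m-valued random field on T = [0,∞)^d with scaling functions f and shift functions g, and suppose for some index j that f_j(a) = 1 for all a ∈ (0,∞)^d (i.e. the exponent vector H^{(j)} is identically zero). Then g_j(a) = 0 for all a ∈ (0,∞)^d and, for every t ∈ T, X_j(t) = X_j(0) almost surely. -/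
/-! When `f_j ≡ 1` the `j`-th coordinate scales in law by a pure translation. At `t = 0` this
says that the law of `X_j(0)` is invariant under translation by `g_j(a)`, which forces
`g_j(a) = 0`: no nonzero finite measure on `ℝ` is invariant under a non-trivial translation,
since the mean of the bounded, strictly increasing `arctan` would strictly increase. Applied to
the pair `(t, 0)`, it says that `X_j(a·t) - X_j(0)` has the law of `X_j(t) - X_j(0)` for every
`a`; as `a → 0` these increments tend to `0` in probability by stochastic continuity, so their
common law is the Dirac mass at `0`. -/

open MeasureTheory Filter Topology ProbabilityTheory

theorem eq_zero_of_map_add_const_eq_self (μ : Measure ℝ) [IsFiniteMeasure μ] [NeZero μ]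
    {c : ℝ} (h : μ.map (· + c) = μ) : c = 0 := by
  by_contra hne
  wlog hc : 0 < c generalizing c
  · refine this (c := -c) ?_ (neg_ne_zero.2 hne) (by grind)
    conv_lhs => rw [← h]
    rw [Measure.map_map (by fun_prop) (by fun_prop)]
    simp
  have hint : ∫ x, Real.arctan (x + c) ∂μ = ∫ x, Real.arctan x ∂μ := by
    rw [← integral_map (measurable_add_const c).aemeasurable
      Real.continuous_arctan.aestronglyMeasurable, h]
  have harctan_int : ∀ y, Integrable (fun x => Real.arctan (x + y)) μ := fun y =>
    .of_bound (by fun_prop) (Real.pi / 2) (ae_of_all _ fun x => abs_le.2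
      ⟨(Real.neg_pi_div_two_lt_arctan _).le, (Real.arctan_lt_pi_div_two _).le⟩)
  have harctan_int₀ : Integrable Real.arctan μ := by simpa using harctan_int 0
  have hpos : ∀ x, 0 < Real.arctan (x + c) - Real.arctan x := fun x =>
    sub_pos.2 (Real.arctan_strictMono (lt_add_of_pos_right x hc))
  have := (integral_pos_iff_support_of_nonneg (fun x => (hpos x).le)
    ((harctan_int c).sub harctan_int₀)).2 (by simp [Function.support, (hpos _).ne', NeZero.ne])
  rw [integral_sub (harctan_int c) harctan_int₀, hint, sub_self] at this
  exact this.false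

theorem MeasureTheory.TendstoInMeasure.of_edist_le {α ι E F : Type*} [EDist E] [EDist F]
    [MeasurableSpace α] {μ : Measure α} {l : Filter ι} {f : ι → α → E} {g : α → E}
    {f' : ι → α → F} {g' : α → F} (hfg : TendstoInMeasure μ f l g)
    (hle : ∀ i x, edist (f' i x) (g' x) ≤ edist (f i x) (g x)) :
    TendstoInMeasure μ f' l g' := fun ε hε =>
  tendsto_of_tendsto_of_tendsto_of_le_of_le tendsto_const_nhds (hfg ε hε) (fun _ => zero_le)
    fun i => measure_mono fun x hx => le_trans hx (hle i x)

theorem ae_eq_const_of_tendstoInMeasure_of_identDistrib {Ω E : Type*} [MeasurableSpace Ω]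
    {P : Measure Ω} [EMetricSpace E] [MeasurableSpace E] [OpensMeasurableSpace E]
    {Y : ℕ → Ω → E} {Z : Ω → E} {c : E} (hY : TendstoInMeasure P Y atTop fun _ => c)
    (hYZ : ∀ n, IdentDistrib (Y n) Z P P) : Z =ᵐ[P] fun _ => c := by
  have hZc : TendstoInMeasure P (fun _ : ℕ => Z) atTop fun _ => c := fun ε hε => by
    have hmeas : MeasurableSet {x : E | ε ≤ edist x c} :=
      (isClosed_le continuous_const (continuous_id.edist continuous_const)).measurableSet
    exact (hY ε hε).congr fun n => (hYZ n).measure_mem_eq hmeas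
  have hZZ : TendstoInMeasure P (fun _ : ℕ => Z) atTop Z := fun ε hε => by
    simp [not_le.2 hε]
  exact tendstoInMeasure_ae_unique hZZ hZc

section

variable {d m : ℕ} {Ω : Type*} [MeasurableSpace Ω]

def ScalesInLaw (P : Measure Ω) (X : (Fin d → ℝ) → Ω → Fin m → ℝ)
    (f g : (Fin d → ℝ) → Fin m → ℝ) : Prop :=
  ∀ a : Fin d → ℝ, (∀ i, 0 < a i) →
    ∀ (k : ℕ) (t : Fin k → Fin d → ℝ), (∀ i i', 0 ≤ t i i') →
      Measure.map (fun ω => fun i => X (a * t i) ω) P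
        = Measure.map (fun ω => fun i => fun j => f a j * X (t i) ω j + g a j) P

variable {P : Measure Ω} {X : (Fin d → ℝ) → Ω → Fin m → ℝ}
  {f g : (Fin d → ℝ) → Fin m → ℝ}

namespace ScalesInLaw

theorem map_coord_pair_eq (hss : ScalesInLaw P X f g) (hX : ∀ t, Measurable (X t))
    {a : Fin d → ℝ} (ha : ∀ i, 0 < a i) {s t : Fin d → ℝ} (hs : ∀ i, 0 ≤ s i)
    (ht : ∀ i, 0 ≤ t i) (j : Fin m) :
    P.map (fun ω => (X (a * s) ω j, X (a * t) ω j))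
      = P.map (fun ω => (f a j * X s ω j + g a j, f a j * X t ω j + g a j)) := by
  have hst : ∀ i i', 0 ≤ (![s, t] : Fin 2 → Fin d → ℝ) i i' := by
    intro i; fin_cases i <;> simpa
  have := congrArg (Measure.map fun v : Fin 2 → Fin m → ℝ => (v 0 j, v 1 j))
    (hss a ha 2 _ hst)
  rwa [Measure.map_map (by fun_prop) (by fun_prop), Measure.map_map (by fun_prop) (by fun_prop)]
    at this

theorem shift_eq_zero [IsProbabilityMeasure P] (hss : ScalesInLaw P X f g)
    (hX : ∀ t, Measurable (X t)) {a : Fin d → ℝ} (ha : ∀ i, 0 < a i) {j : Fin m}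
    (hf : f a j = 1) : g a j = 0 := by
  have hpair := congrArg (Measure.map Prod.fst)
    (hss.map_coord_pair_eq hX ha (s := 0) (t := 0) (fun _ => le_rfl) (fun _ => le_rfl) j)
  rw [Measure.map_map (by fun_prop) (by fun_prop), Measure.map_map (by fun_prop) (by fun_prop)]
    at hpair
  have : IsProbabilityMeasure (P.map fun ω => X 0 ω j) :=
    Measure.isProbabilityMeasure_map (by fun_prop)
  refine eq_zero_of_map_add_const_eq_self (P.map fun ω => X 0 ω j) ?_
  rw [Measure.map_map (by fun_prop) (by fun_prop)]
  simpa [Function.comp_def, hf] using hpair.symm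

theorem identDistrib_increment (hss : ScalesInLaw P X f g)
    (hX : ∀ t, Measurable (X t)) {a : Fin d → ℝ} (ha : ∀ i, 0 < a i) {t : Fin d → ℝ}
    (ht : ∀ i, 0 ≤ t i) {j : Fin m} (hf : f a j = 1) :
    IdentDistrib (fun ω => X (a * t) ω j - X 0 ω j) (fun ω => X t ω j - X 0 ω j) P P where
  aemeasurable_fst := by fun_prop
  aemeasurable_snd := by fun_prop
  map_eq := by
    have hpair := congrArg (Measure.map fun p : ℝ × ℝ => p.1 - p.2)
      (hss.map_coord_pair_eq hX ha (t := 0) ht (fun _ => le_rfl) j)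
    rw [Measure.map_map (by fun_prop) (by fun_prop), Measure.map_map (by fun_prop) (by fun_prop)]
      at hpair
    simpa [Function.comp_def, hf] using hpair

theorem ae_eq_apply_zero (hss : ScalesInLaw P X f g) (hX : ∀ t, Measurable (X t))
    (hcont : ∀ u : ℕ → Fin d → ℝ, (∀ n i, 0 ≤ u n i) → Tendsto u atTop (𝓝 0) →
      TendstoInMeasure P (fun n => X (u n)) atTop (X 0))
    {j : Fin m} (hf : ∀ a : Fin d → ℝ, (∀ i, 0 < a i) → f a j = 1)
    {t : Fin d → ℝ} (ht : ∀ i, 0 ≤ t i) : ∀ᵐ ω ∂P, X t ω j = X 0 ω j := by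
  set a : ℕ → Fin d → ℝ := fun n _ => 1 / ((n : ℝ) + 1)
  have ha : ∀ n i, 0 < a n i := fun n i => by positivity
  have hat : Tendsto (fun n => a n * t) atTop (𝓝 0) := by
    have : Tendsto a atTop (𝓝 0) :=
      tendsto_pi_nhds.2 fun _ => tendsto_one_div_add_atTop_nhds_zero_nat
    simpa using this.mul_const t
  have hincr : TendstoInMeasure P (fun n ω => X (a n * t) ω j - X 0 ω j) atTop fun _ => 0 :=
    (hcont _ (fun n i => mul_nonneg (ha n i).le (ht i)) hat).of_edist_le fun n ω => by
      rw [edist_zero_right, ← edist_eq_enorm_sub]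
      exact edist_le_pi_edist _ _ j
  filter_upwards [ae_eq_const_of_tendstoInMeasure_of_identDistrib hincr
    fun n => hss.identDistrib_increment hX (ha n) ht (hf _ (ha n))] with ω hω
  exact sub_eq_zero.1 hω

end ScalesInLaw

end

theorem stmt_11_general {d m : ℕ} {Ω : Type*} [MeasurableSpace Ω]
    (P : Measure Ω) [IsProbabilityMeasure P]
    (X : (Fin d → ℝ) → Ω → (Fin m → ℝ))
    (hXmeas : ∀ t, Measurable (X t))
    -- stochastic continuity on `[0,∞)^d`
    (hXcont : ∀ t : Fin d → ℝ, (∀ i, 0 ≤ t i) →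
      ∀ u : ℕ → Fin d → ℝ, (∀ n i, 0 ≤ u n i) → Tendsto u atTop (𝓝 t) →
        TendstoInMeasure P (fun n => X (u n)) atTop (X t))
    (f : (Fin d → ℝ) → Fin m → ℝ) (g : (Fin d → ℝ) → Fin m → ℝ)
    -- wide-sense multi-self-similarity
    (hss : ∀ a : Fin d → ℝ, (∀ i, 0 < a i) →
      ∀ (k : ℕ) (t : Fin k → Fin d → ℝ), (∀ i i', 0 ≤ t i i') →
        Measure.map (fun ω => fun i => X (a * t i) ω) P
          = Measure.map (fun ω => fun i => fun j => f a j * X (t i) ω j + g a j) P)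
    (j : Fin m)
    (hfj : ∀ a : Fin d → ℝ, (∀ i, 0 < a i) → f a j = 1) :
    (∀ a : Fin d → ℝ, (∀ i, 0 < a i) → g a j = 0) ∧
    (∀ t : Fin d → ℝ, (∀ i, 0 ≤ t i) → ∀ᵐ ω ∂P, X t ω j = X 0 ω j) :=
  have hscale : ScalesInLaw P X f g := hss
  ⟨fun _ ha => hscale.shift_eq_zero hXmeas ha (hfj _ ha),
    fun _ ht => hscale.ae_eq_apply_zero hXmeas (hXcont 0 fun _ => le_rfl) hfj ht⟩

/-- Let `X` be a non-degenerate wide-sense multi-self-similar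
`ℝ^m`-valued random field on `T = [0,∞)^d` with scaling functions `f` and shift
functions `g`, and suppose `f_j(a) = 1` for all `a ∈ (0,∞)^d` for some index `j`.
Then `g_j(a) = 0` for all `a ∈ (0,∞)^d` and, for every `t ∈ T`,
`X_j(t) = X_j(0)` almost surely. -/
theorem stmt_11 {d m : ℕ} {Ω : Type*} [MeasurableSpace Ω]
    (P : Measure Ω) [IsProbabilityMeasure P]
    (X : (Fin d → ℝ) → Ω → (Fin m → ℝ))
    (hXmeas : ∀ t, Measurable (X t))
    -- stochastic continuity on `[0,∞)^d`
    (hXcont : ∀ t : Fin d → ℝ, (∀ i, 0 ≤ t i) →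
      ∀ u : ℕ → Fin d → ℝ, (∀ n i, 0 ≤ u n i) → Tendsto u atTop (𝓝 t) →
        TendstoInMeasure P (fun n => X (u n)) atTop (X t))
    (f : (Fin d → ℝ) → Fin m → ℝ) (g : (Fin d → ℝ) → Fin m → ℝ)
    (hfpos : ∀ a : Fin d → ℝ, (∀ i, 0 < a i) → ∀ j, 0 < f a j)
    -- wide-sense multi-self-similarity
    (hss : ∀ a : Fin d → ℝ, (∀ i, 0 < a i) →
      ∀ (k : ℕ) (t : Fin k → Fin d → ℝ), (∀ i i', 0 ≤ t i i') →
        Measure.map (fun ω => fun i => X (a * t i) ω) P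
          = Measure.map (fun ω => fun i => fun j => f a j * X (t i) ω j + g a j) P)
    -- non-degeneracy: `X_j(1,...,1)` is not a.s. constant
    (hnd : ∀ j, ¬ ∃ c : ℝ, ∀ᵐ ω ∂P, X (fun _ => 1) ω j = c)
    (j : Fin m)
    (hfj : ∀ a : Fin d → ℝ, (∀ i, 0 < a i) → f a j = 1) :
    (∀ a : Fin d → ℝ, (∀ i, 0 < a i) → g a j = 0) ∧
    (∀ t : Fin d → ℝ, (∀ i, 0 ≤ t i) → ∀ᵐ ω ∂P, X t ω j = X 0 ω j) :=
  stmt_11_general P X hXmeas hXcont f g hss j hfj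
end

section
/- Let H ∈ ℝ^d with H ≠ 0, and let 𝑑 : ℝ^d → ℝ be a continuous function satisfying the functional equation 𝑑(u+v) = 𝑑(v) + 𝑑(u)·exp(Σ_{i=1}^d v_i H_i) for all u, v ∈ ℝ^d. Then there exists a constant D ∈ ℝ such that 𝑑(u) = D(1 − exp(Σ_{i=1}^d u_i H_i)) for all u ∈ ℝ^d. -/
open Filter Topology

/-- Let `H ∈ ℝ^d`, `H ≠ 0`, and let `dfun : ℝ^d → ℝ` be a
continuous solution of `dfun(u+v) = dfun(v) + dfun(u)·exp(Σ_i v_i H_i)`.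
Then `dfun(u) = D(1 − exp(Σ_i u_i H_i))` for some constant `D ∈ ℝ`. -/
theorem stmt_13 {d : ℕ} (H : Fin d → ℝ) (hH : H ≠ 0)
    (dfun : (Fin d → ℝ) → ℝ) (hcont : Continuous dfun)
    (heq : ∀ u v : Fin d → ℝ,
      dfun (u + v) = dfun v + dfun u * Real.exp (∑ i, v i * H i)) :
    ∃ D : ℝ, ∀ u : Fin d → ℝ,
      dfun u = D * (1 - Real.exp (∑ i, u i * H i)) := by
  obtain ⟨i, hi⟩ : ∃ i, H i ≠ 0 := by
    by_contra h
    push_neg at h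
    exact hH (funext h)
  set u0 : Fin d → ℝ := Pi.single i 1 with hu0
  have hsum : (∑ j, u0 j * H j) = H i := by
    rw [hu0, Finset.sum_eq_single i]
    · simp
    · intro b _ hb; simp [Pi.single_apply, hb]
    · simp
  have hne : Real.exp (∑ j, u0 j * H j) ≠ 1 := by
    rw [hsum]; simpa using hi
  -- key symmetric identity
  have key : ∀ v : Fin d → ℝ,
      dfun v * (1 - Real.exp (∑ j, u0 j * H j))
        = dfun u0 * (1 - Real.exp (∑ j, v j * H j)) := by
    intro v
    have h1 := heq u0 v
    have h2 := heq v u0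
    rw [add_comm] at h2
    rw [h1] at h2
    ring_nf
    ring_nf at h2
    linarith
  refine ⟨dfun u0 / (1 - Real.exp (∑ j, u0 j * H j)), fun u => ?_⟩
  have hne' : (1 - Real.exp (∑ j, u0 j * H j)) ≠ 0 := sub_ne_zero.mpr (Ne.symm hne)
  field_simp
  linarith [key u]
end

section
/- Let X be an ℝ^m-valued random field on ℝ^d that is continuous in probability and proper (for every t ≠ 0 the distribution of X(t) is full, i.e. not supported on any proper affine hyperplane of ℝ^m). Suppose there exist a real d×d matrix E, all of whose complex eigenvalues have positive real part, and a function f : (0,∞) → GL(ℝ^m) such that for all k and all t₁,...,t_k ∈ ℝ^d, the random vectors (f(r)Y(r^E t₁),...,f(r)Y(r^E t_k)) converge in distribution to (X(t₁),...,X(t_k)) as r → ∞, where r^E = exp((ln r)·E) and Y is an ℝ^m-valued random field on ℝ^d. Then X is operator self-similar with time-scaling exponent E: for every r > 0 there exists a linear operator B(r) on ℝ^m such that {X(r^E t), t ∈ ℝ^d} =_{f.d.d.} {B(r)X(t), t ∈ ℝ^d}. -/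
open MeasureTheory Filter Topology

/-!
Convergence of types. Fix `r > 0`, let `Vₙ = f(n+1) Y((n+1)^E ·)` and
`Tₙ = f((n+1)/r) f(n+1)⁻¹`. Since `((n+1)/r)^E r^E = (n+1)^E`, the f.d.d. of `Vₙ` converge to
those of `X`, and those of `Tₙ Vₙ` to those of `X(r^E ·)`. If `‖Tₙ‖ → ∞`, then along a
subsequence with `Tₙ/‖Tₙ‖ → U ≠ 0` Slutsky's theorem makes `Tₙ Vₙ(t₀)/‖Tₙ‖` converge in law both
to `0` and to `U X(t₀)`, so `X(t₀)` is carried by a hyperplane, against properness at `t₀ ≠ 0`.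
Hence some subsequence `Tₙ → B`, and along it `Tₙ Vₙ → B X` in f.d.d.; uniqueness of weak limits
gives `X(r^E ·) =_{f.d.d.} B X(·)`.
-/

theorem MeasureTheory.ae_eq_zero_of_map_eq_map_zero {Ω Ω' E : Type*} {mΩ : MeasurableSpace Ω}
    {mΩ' : MeasurableSpace Ω'} [Zero E] [MeasurableSpace E] [MeasurableSingletonClass E]
    {μ : Measure Ω} {ν : Measure Ω'} {Y : Ω → E} (hY : AEMeasurable Y μ)
    (h : μ.map Y = ν.map (fun _ => (0 : E))) : ∀ᵐ ω ∂μ, Y ω = 0 := by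
  have hmap : μ.map Y {0}ᶜ = 0 := by simp [h, Measure.map_const]
  rwa [Measure.map_apply_of_aemeasurable hY (measurableSet_singleton 0).compl] at hmap

section
variable {Ω Ω' : Type*} {mΩ : MeasurableSpace Ω} {mΩ' : MeasurableSpace Ω'}
  {μ : Measure Ω} [IsProbabilityMeasure μ] {μ' : Measure Ω'} [IsProbabilityMeasure μ']

theorem MeasureTheory.TendstoInDistribution.comp_tendsto {ι κ E : Type*} [TopologicalSpace E]
    [MeasurableSpace E] [OpensMeasurableSpace E] {X : ι → Ω' → E} {Z : Ω → E} {l : Filter ι}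
    (h : TendstoInDistribution X l Z (fun _ => μ') μ) {ψ : κ → ι} {l' : Filter κ}
    (hψ : Tendsto ψ l' l) :
    TendstoInDistribution (fun n => X (ψ n)) l' Z (fun _ => μ') μ :=
  ⟨fun n => h.forall_aemeasurable (ψ n), h.aemeasurable_limit, h.tendsto.comp hψ⟩

theorem MeasureTheory.tendstoInDistribution_of_forall_integral_tendsto {ι E : Type*}
    [TopologicalSpace E] [MeasurableSpace E] [OpensMeasurableSpace E] {X : ι → Ω' → E}
    {Z : Ω → E} {l : Filter ι} (hX : ∀ i, AEMeasurable (X i) μ') (hZ : AEMeasurable Z μ)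
    (h : ∀ φ : BoundedContinuousFunction E ℝ,
      Tendsto (fun i => ∫ ω, φ (X i ω) ∂μ') l (𝓝 (∫ ω, φ (Z ω) ∂μ))) :
    TendstoInDistribution X l Z (fun _ => μ') μ where
  forall_aemeasurable := hX
  aemeasurable_limit := hZ
  tendsto := by
    refine ProbabilityMeasure.tendsto_iff_forall_integral_tendsto.mpr fun φ => ?_
    simp only [ProbabilityMeasure.coe_mk]
    rw [integral_map hZ φ.continuous.aestronglyMeasurable]
    refine (h φ).congr fun i => ?_
    rw [integral_map (hX i) φ.continuous.aestronglyMeasurable]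

theorem MeasureTheory.TendstoInDistribution.continuous_comp_prodMk_of_tendsto
    {E E' F : Type*} [SeminormedAddCommGroup E] [SecondCountableTopology E] [MeasurableSpace E]
    [BorelSpace E] [SeminormedAddCommGroup E'] [SecondCountableTopology E'] [MeasurableSpace E']
    [BorelSpace E'] [TopologicalSpace F] [MeasurableSpace F] [BorelSpace F]
    {g : E × E' → F} (hg : Continuous g) {X : ℕ → Ω' → E} {Z : Ω → E}
    (hXZ : TendstoInDistribution X atTop Z (fun _ => μ') μ) {c : ℕ → E'} {c₀ : E'}
    (hc : Tendsto c atTop (𝓝 c₀)) :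
    TendstoInDistribution (fun n ω => g (X n ω, c n)) atTop (fun ω => g (Z ω, c₀))
      (fun _ => μ') μ :=
  hXZ.continuous_comp_prodMk_of_tendstoInMeasure_const hg
    (tendstoInMeasure_of_tendsto_ae (fun _ => aestronglyMeasurable_const) (ae_of_all _ fun _ => hc))
    (fun _ => aemeasurable_const)

variable {W : Type*} [NormedAddCommGroup W] [NormedSpace ℝ W] [FiniteDimensional ℝ W]
  [MeasurableSpace W] [BorelSpace W]

theorem not_tendsto_norm_atTop_of_tendstoInDistribution {V : ℕ → Ω' → W} {Z Z' : Ω → W}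
    {T : ℕ → W →L[ℝ] W} (hV : TendstoInDistribution V atTop Z (fun _ => μ') μ)
    (hTV : TendstoInDistribution (fun n ω => T n (V n ω)) atTop Z' (fun _ => μ') μ)
    (hZ : ∀ L : W →L[ℝ] ℝ, (∀ᵐ ω ∂μ, L (Z ω) = 0) → L = 0) :
    ¬ Tendsto (fun n => ‖T n‖) atTop atTop := by
  intro hT
  have hsphere : ∀ᶠ n in atTop, ‖T n‖⁻¹ • T n ∈ Metric.sphere (0 : W →L[ℝ] W) 1 := by
    filter_upwards [hT.eventually_gt_atTop 0] with n hn
    simp [norm_smul, hn.ne']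
  obtain ⟨U, hU, ψ, hψ, hTU⟩ :=
    tendsto_subseq_of_frequently_bounded Metric.isBounded_sphere hsphere.frequently
  rw [Metric.isClosed_sphere.closure_eq, mem_sphere_zero_iff_norm] at hU
  have hψT := hT.comp hψ.tendsto_atTop
  have hUZ : TendstoInDistribution (fun n ω => ‖T (ψ n)‖⁻¹ • T (ψ n) (V (ψ n) ω)) atTop
      (fun ω => U (Z ω)) (fun _ => μ') μ :=
    (hV.comp_tendsto hψ.tendsto_atTop).continuous_comp_prodMk_of_tendsto
      (g := fun p : W × (W →L[ℝ] W) => p.2 p.1) (by fun_prop) hTU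
  have hzero : TendstoInDistribution (fun n ω => ‖T (ψ n)‖⁻¹ • T (ψ n) (V (ψ n) ω)) atTop
      (fun _ => (0 : W)) (fun _ => μ') μ := by
    have := (hTV.comp_tendsto hψ.tendsto_atTop).continuous_comp_prodMk_of_tendsto
      (g := fun p : W × ℝ => p.2 • p.1) (by fun_prop) hψT.inv_tendsto_atTop
    simpa only [zero_smul, Pi.inv_apply, Function.comp_apply] using this
  have hUZ0 : ∀ᵐ ω ∂μ, U (Z ω) = 0 :=
    ae_eq_zero_of_map_eq_map_zero hUZ.aemeasurable_limit
      (tendstoInDistribution_unique _ hUZ hzero)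
  obtain ⟨v, hv⟩ : ∃ v, U v ≠ 0 := by
    by_contra! h
    exact one_ne_zero (hU.symm.trans (by simp [show U = 0 from ContinuousLinearMap.ext h]))
  obtain ⟨L, hL⟩ := SeparatingDual.exists_ne_zero (R := ℝ) hv
  refine hL ?_
  have := hZ (L.comp U) (hUZ0.mono fun ω hω => by simp [hω])
  simpa using congrArg (fun L' => L' v) this

theorem exists_subseq_tendsto_of_tendstoInDistribution {V : ℕ → Ω' → W} {Z Z' : Ω → W}
    {T : ℕ → W →L[ℝ] W} (hV : TendstoInDistribution V atTop Z (fun _ => μ') μ)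
    (hTV : TendstoInDistribution (fun n ω => T n (V n ω)) atTop Z' (fun _ => μ') μ)
    (hZ : ∀ L : W →L[ℝ] ℝ, (∀ᵐ ω ∂μ, L (Z ω) = 0) → L = 0) :
    ∃ B : W →L[ℝ] W, ∃ ψ : ℕ → ℕ, StrictMono ψ ∧ Tendsto (T ∘ ψ) atTop (𝓝 B) := by
  obtain ⟨C, hC⟩ : ∃ C, ∃ᶠ n in atTop, T n ∈ Metric.closedBall 0 C := by
    have h := not_tendsto_norm_atTop_of_tendstoInDistribution hV hTV hZ
    simp only [tendsto_atTop, not_forall, not_eventually, not_le] at h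
    obtain ⟨C, hC⟩ := h
    exact ⟨C, hC.mono fun n hn => mem_closedBall_zero_iff.mpr hn.le⟩
  obtain ⟨B, -, ψ, hψ, hB⟩ := tendsto_subseq_of_frequently_bounded Metric.isBounded_closedBall hC
  exact ⟨B, ψ, hψ, hB⟩

end

theorem Matrix.exp_log_div_smul_mul_exp_log_smul {ι : Type*} [Fintype ι] [DecidableEq ι]
    (E : Matrix ι ι ℝ) {a r : ℝ} (ha : a ≠ 0) (hr : r ≠ 0) :
    NormedSpace.exp (Real.log (a / r) • E) * NormedSpace.exp (Real.log r • E)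
      = NormedSpace.exp (Real.log a • E) := by
  rw [← Matrix.exp_add_of_commute _ _ ((Commute.refl E).smul_left _ |>.smul_right _),
    ← add_smul, Real.log_div ha hr, sub_add_cancel]

theorem ContinuousLinearMap.apply_eq_sum_mul_single {m : ℕ} (L : (Fin m → ℝ) →L[ℝ] ℝ)
    (x : Fin m → ℝ) : L x = ∑ j, L (Pi.single j 1) * x j := by
  conv_lhs => rw [← Finset.univ_sum_single x]
  simp only [map_sum]
  refine Finset.sum_congr rfl fun j _ => ?_
  rw [mul_comm, ← smul_eq_mul, ← map_smul, ← Pi.single_smul', smul_eq_mul, mul_one]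

theorem ContinuousLinearMap.eq_zero_of_ae_apply_eq_zero {Ω : Type*} {mΩ : MeasurableSpace Ω}
    {μ : Measure Ω} {m : ℕ} {Z : Ω → Fin m → ℝ}
    (hZ : ¬ ∃ (w : Fin m → ℝ) (c : ℝ), w ≠ 0 ∧ ∀ᵐ ω ∂μ, ∑ j, w j * Z ω j = c)
    (L : (Fin m → ℝ) →L[ℝ] ℝ) (hL : ∀ᵐ ω ∂μ, L (Z ω) = 0) : L = 0 := by
  by_contra hL0
  refine hZ ⟨fun j => L (Pi.single j 1), 0, fun hw => hL0 ?_, ?_⟩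
  · ext x
    simp [L.apply_eq_sum_mul_single x, congrFun hw]
  · simpa only [← L.apply_eq_sum_mul_single] using hL

theorem stmt_16_general {d m : ℕ} {Ω Ω' : Type*} [MeasurableSpace Ω] [MeasurableSpace Ω']
    (P : Measure Ω) [IsProbabilityMeasure P]
    (P' : Measure Ω') [IsProbabilityMeasure P']
    (X : (Fin d → ℝ) → Ω → (Fin m → ℝ))
    (Y : (Fin d → ℝ) → Ω' → (Fin m → ℝ))
    (hXmeas : ∀ t, Measurable (X t))
    (hYmeas : ∀ t, Measurable (Y t))
    -- `X` is proper: for `t ≠ 0` the law of `X(t)` is not carried by a proper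
    -- affine hyperplane of `ℝ^m`
    (hXproper : ∀ t : Fin d → ℝ, t ≠ 0 →
      ¬ ∃ (w : Fin m → ℝ) (c : ℝ), w ≠ 0 ∧ ∀ᵐ ω ∂P, ∑ j, w j * X t ω j = c)
    (E : Matrix (Fin d) (Fin d) ℝ)
    (f : ℝ → ((Fin m → ℝ) ≃ₗ[ℝ] (Fin m → ℝ)))
    -- convergence of finite-dimensional distributions as `r → ∞`
    (hconv : ∀ (k : ℕ) (t : Fin k → Fin d → ℝ),
      ∀ φ : BoundedContinuousFunction (Fin k → Fin m → ℝ) ℝ,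
        Tendsto (fun r : ℝ =>
            ∫ ω, φ (fun i =>
              f r (Y ((NormedSpace.exp (Real.log r • E)).mulVec (t i)) ω)) ∂P')
          atTop (𝓝 (∫ ω, φ (fun i => X (t i) ω) ∂P))) :
    ∀ r : ℝ, 0 < r → ∃ B : (Fin m → ℝ) →ₗ[ℝ] (Fin m → ℝ),
      ∀ (k : ℕ) (t : Fin k → Fin d → ℝ),
        Measure.map
            (fun ω => fun i => X ((NormedSpace.exp (Real.log r • E)).mulVec (t i)) ω) P
          = Measure.map (fun ω => fun i => B (X (t i) ω)) P := by
  intro r hr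
  rcases subsingleton_or_nontrivial (Fin d → ℝ) with hd | hd
  · have hrE : ∀ v : Fin d → ℝ, (NormedSpace.exp (Real.log r • E)).mulVec v = v :=
      fun v => Subsingleton.elim _ _
    exact ⟨LinearMap.id, fun k t => by simp only [hrE, LinearMap.id_apply]⟩
  obtain ⟨t₀, ht₀⟩ := exists_ne (0 : Fin d → ℝ)
  set rE := NormedSpace.exp (Real.log r • E)
  set s : ℕ → ℝ := fun n => n + 1
  have hs : Tendsto s atTop atTop := tendsto_atTop_add_const_right _ _ tendsto_natCast_atTop_atTop
  have hs0 : ∀ n, s n ≠ 0 := fun n => by positivity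
  have hfdd : ∀ σ : ℕ → ℝ, Tendsto σ atTop atTop → ∀ (k : ℕ) (t : Fin k → Fin d → ℝ),
      TendstoInDistribution
        (fun n ω i => f (σ n) (Y ((NormedSpace.exp (Real.log (σ n) • E)).mulVec (t i)) ω))
        atTop (fun ω i => X (t i) ω) (fun _ => P') P := fun σ hσ k t =>
    tendstoInDistribution_of_forall_integral_tendsto
      (fun n => (measurable_pi_lambda _ fun i =>
        (f (σ n)).toContinuousLinearEquiv.continuous.measurable.comp (hYmeas _)).aemeasurable)
      (measurable_pi_lambda _ fun i => hXmeas (t i)).aemeasurable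
      fun φ => (hconv k t φ).comp hσ
  let T : ℕ → (Fin m → ℝ) →L[ℝ] (Fin m → ℝ) := fun n =>
    ((f (s n)).symm.trans (f (s n / r))).toContinuousLinearEquiv
  have hscaled : ∀ (k : ℕ) (t : Fin k → Fin d → ℝ), TendstoInDistribution
      (fun n ω i => T n (f (s n) (Y ((NormedSpace.exp (Real.log (s n) • E)).mulVec (t i)) ω)))
      atTop (fun ω i => X (rE.mulVec (t i)) ω) (fun _ => P') P := by
    intro k t
    convert hfdd (fun n => s n / r) (hs.atTop_div_const hr) k (fun i => rE.mulVec (t i))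
      using 4 with n ω i
    simp [T, rE, Matrix.mulVec_mulVec, Matrix.exp_log_div_smul_mul_exp_log_smul E (hs0 n) hr.ne']
  obtain ⟨B, ψ, hψ, hTB⟩ := exists_subseq_tendsto_of_tendstoInDistribution (T := T)
    ((hfdd s hs 1 fun _ => t₀).continuous_comp
      (g := fun v : Fin 1 → Fin m → ℝ => v 0) (continuous_apply 0))
    ((hscaled 1 fun _ => t₀).continuous_comp
      (g := fun v : Fin 1 → Fin m → ℝ => v 0) (continuous_apply 0))
    (ContinuousLinearMap.eq_zero_of_ae_apply_eq_zero (hXproper t₀ ht₀))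
  refine ⟨B, fun k t => ?_⟩
  have hB := ((hfdd s hs k t).comp_tendsto hψ.tendsto_atTop).continuous_comp_prodMk_of_tendsto
    (g := fun p : (Fin k → Fin m → ℝ) × ((Fin m → ℝ) →L[ℝ] (Fin m → ℝ)) => fun i => p.2 (p.1 i))
    (by fun_prop) hTB
  exact tendstoInDistribution_unique _ ((hscaled k t).comp_tendsto hψ.tendsto_atTop) hB

/-- Let `X` be a proper, continuous-in-probability `ℝ^m`-valued
random field on `ℝ^d`. Suppose there exist a real `d×d` matrix `E` all of whose
complex eigenvalues have positive real part, and `f : (0,∞) → GL(ℝ^m)`, such that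
the finite-dimensional distributions of `f(r)Y(r^E t)` converge weakly to those of
`X` as `r → ∞`, where `r^E = exp((ln r)·E)` and `Y` is an `ℝ^m`-valued random
field on `ℝ^d`. Then `X` is operator self-similar with time-scaling exponent `E`:
for every `r > 0` there is a linear operator `B(r)` on `ℝ^m` with
`{X(r^E t)} =_{f.d.d.} {B(r)X(t)}`. -/
theorem stmt_16 {d m : ℕ} {Ω Ω' : Type*} [MeasurableSpace Ω] [MeasurableSpace Ω']
    (P : Measure Ω) [IsProbabilityMeasure P]
    (P' : Measure Ω') [IsProbabilityMeasure P']
    (X : (Fin d → ℝ) → Ω → (Fin m → ℝ))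
    (Y : (Fin d → ℝ) → Ω' → (Fin m → ℝ))
    (hXmeas : ∀ t, Measurable (X t))
    (hYmeas : ∀ t, Measurable (Y t))
    -- `X` is continuous in probability
    (hXcont : ∀ t : Fin d → ℝ, ∀ u : ℕ → Fin d → ℝ, Tendsto u atTop (𝓝 t) →
      TendstoInMeasure P (fun n => X (u n)) atTop (X t))
    -- `X` is proper: for `t ≠ 0` the law of `X(t)` is not carried by a proper
    -- affine hyperplane of `ℝ^m`
    (hXproper : ∀ t : Fin d → ℝ, t ≠ 0 →
      ¬ ∃ (w : Fin m → ℝ) (c : ℝ), w ≠ 0 ∧ ∀ᵐ ω ∂P, ∑ j, w j * X t ω j = c)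
    (E : Matrix (Fin d) (Fin d) ℝ)
    -- every complex eigenvalue of `E` has positive real part
    (hE : ∀ z ∈ spectrum ℂ (E.map (Complex.ofReal)), 0 < z.re)
    (f : ℝ → ((Fin m → ℝ) ≃ₗ[ℝ] (Fin m → ℝ)))
    -- convergence of finite-dimensional distributions as `r → ∞`
    (hconv : ∀ (k : ℕ) (t : Fin k → Fin d → ℝ),
      ∀ φ : BoundedContinuousFunction (Fin k → Fin m → ℝ) ℝ,
        Tendsto (fun r : ℝ =>
            ∫ ω, φ (fun i =>
              f r (Y ((NormedSpace.exp (Real.log r • E)).mulVec (t i)) ω)) ∂P')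
          atTop (𝓝 (∫ ω, φ (fun i => X (t i) ω) ∂P))) :
    ∀ r : ℝ, 0 < r → ∃ B : (Fin m → ℝ) →ₗ[ℝ] (Fin m → ℝ),
      ∀ (k : ℕ) (t : Fin k → Fin d → ℝ),
        Measure.map
            (fun ω => fun i => X ((NormedSpace.exp (Real.log r • E)).mulVec (t i)) ω) P
          = Measure.map (fun ω => fun i => B (X (t i) ω)) P :=
  stmt_16_general P P' X Y hXmeas hYmeas hXproper E f hconv
end

section
/- Let G be a group acting on a set T and C : G → GL(ℝ^m) a map satisfying C(g₁g₂) = C(g₁)∘C(g₂) for all g₁, g₂ ∈ G. Let X be an ℝ^m-valued random field on T that is (G,C)-self-similar: for every g ∈ G, {X(g·t), t ∈ T} =_{f.d.d.} {C(g)X(t), t ∈ T}. Let ℋ be a group acting on a set S, let F : ℋ → G be a group isomorphism, let φ : S → T be a bijection satisfying F(h)·φ(s) = φ(h·s) for all h ∈ ℋ and s ∈ S, and let f : S → GL(ℝ^m) satisfy f(h·s)∘C(F(h)) = f(s) for all h ∈ ℋ and s ∈ S. Then the random field Y(s) := f(s)(X(φ(s))), s ∈ S, is ℋ-stationary: for every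 h ∈ ℋ, {Y(h·s), s ∈ S} =_{f.d.d.} {Y(s), s ∈ S}. -/
open MeasureTheory

lemma map_equiv_comp {Ω α β : Type*} [MeasurableSpace Ω] [MeasurableSpace α]
    [MeasurableSpace β] (P : Measure Ω) (e : α ≃ᵐ β) (A : Ω → α) :
    Measure.map (fun ω => e (A ω)) P = Measure.map e (Measure.map A P) := by
  by_cases hA : AEMeasurable A P
  · rw [AEMeasurable.map_map_of_aemeasurable e.measurable.aemeasurable hA]
    rfl
  · have hEA : ¬ AEMeasurable (fun ω => e (A ω)) P := by
      intro h
      have := e.symm.measurable.comp_aemeasurable h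
      have h2 : (⇑e.symm ∘ fun ω => e (A ω)) = A := by
        funext ω; simp
      exact hA (h2 ▸ this)
    rw [Measure.map_of_not_aemeasurable hA, Measure.map_of_not_aemeasurable hEA,
      Measure.map_zero]

/-- Let `G` act on `T` and `C : G → GL(ℝ^m)` satisfy
`C(g₁g₂) = C(g₁)∘C(g₂)`. Let `X` be a `(G,C)`-self-similar `ℝ^m`-valued random
field on `T`. Let `ℋ` act on `S`, `F : ℋ → G` a group isomorphism,
`φ : S → T` a bijection with `F(h)·φ(s) = φ(h·s)`, and `f : S → GL(ℝ^m)` with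
`f(h·s)∘C(F(h)) = f(s)`. Then `Y(s) := f(s)(X(φ(s)))` is `ℋ`-stationary. -/
theorem stmt_17 {m : ℕ} {G H T S : Type*} [Group G] [Group H]
    [MulAction G T] [MulAction H S]
    {Ω : Type*} [MeasurableSpace Ω] (P : Measure Ω) [IsProbabilityMeasure P]
    (C : G → ((Fin m → ℝ) ≃ₗ[ℝ] (Fin m → ℝ)))
    (hC : ∀ (g₁ g₂ : G) (v : Fin m → ℝ), C (g₁ * g₂) v = C g₁ (C g₂ v))
    (X : T → Ω → (Fin m → ℝ))
    -- `(G,C)`-self-similarity of `X`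
    (hss : ∀ (g : G) (k : ℕ) (t : Fin k → T),
      Measure.map (fun ω => fun i => X (g • t i) ω) P
        = Measure.map (fun ω => fun i => C g (X (t i) ω)) P)
    (F : H ≃* G) (φ : S ≃ T)
    (hφ : ∀ (h : H) (s : S), F h • φ s = φ (h • s))
    (f : S → ((Fin m → ℝ) ≃ₗ[ℝ] (Fin m → ℝ)))
    (hf : ∀ (h : H) (s : S) (v : Fin m → ℝ), f (h • s) (C (F h) v) = f s v)
    (Y : S → Ω → (Fin m → ℝ))
    (hY : ∀ (s : S) (ω : Ω), Y s ω = f s (X (φ s) ω)) :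
    -- `Y` is `ℋ`-stationary
    ∀ (h : H) (k : ℕ) (s : Fin k → S),
      Measure.map (fun ω => fun i => Y (h • s i) ω) P
        = Measure.map (fun ω => fun i => Y (s i) ω) P := by
  intro h k s
  -- the measurable equivalence applying f (h • s i) coordinatewise
  let e : (Fin k → (Fin m → ℝ)) ≃ᵐ (Fin k → (Fin m → ℝ)) :=
    MeasurableEquiv.piCongrRight (fun i =>
      ((f (h • s i)).toContinuousLinearEquiv.toHomeomorph.toMeasurableEquiv))
  have he : ∀ (v : Fin k → (Fin m → ℝ)) (i : Fin k), e v i = f (h • s i) (v i) :=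
    fun v i => rfl
  have h1 : (fun ω => fun i => Y (h • s i) ω)
      = (fun ω => e (fun i => X ((F h) • φ (s i)) ω)) := by
    funext ω; funext i
    rw [he, hY, hφ]
  have h2 : (fun ω => e (fun i => C (F h) (X (φ (s i)) ω)))
      = (fun ω => fun i => Y (s i) ω) := by
    funext ω; funext i
    rw [he, hf, hY]
  calc Measure.map (fun ω => fun i => Y (h • s i) ω) P
      = Measure.map e (Measure.map (fun ω => fun i => X ((F h) • φ (s i)) ω) P) := by
        rw [h1, map_equiv_comp]
    _ = Measure.map e (Measure.map (fun ω => fun i => C (F h) (X (φ (s i)) ω)) P) := by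
        rw [hss]
    _ = Measure.map (fun ω => fun i => Y (s i) ω) P := by
        rw [← map_equiv_comp, h2]
end

section
/- Let G be a group acting on a set T and C : G → GL(ℝ^m) a map satisfying C(g₁g₂) = C(g₁)∘C(g₂) for all g₁, g₂ ∈ G. Let ℋ be a group acting on a set S, let F : ℋ → G be a group isomorphism, let φ : S → T be a bijection satisfying F(h)·φ(s) = φ(h·s) for all h ∈ ℋ and s ∈ S, and let f : S → GL(ℝ^m) satisfy f(h·s)∘C(F(h)) = f(s) for all h ∈ ℋ and s ∈ S. Let Y be an ℝ^m-valued random field on S that is ℋ-stationary: for every h ∈ ℋ, {Y(h·s), s ∈ S} =_{f.d.d.} {Y(s), s ∈ S}. Then the random field X(t) := (f(φ⁻¹(t)))⁻¹(Y(φ⁻¹(t))), t ∈ T, is (G,C)-self-similar: for every g ∈ G, {X(g·t), t ∈ T} =_{f.d.d.} {C(g)X(t), t ∈ T}. -/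
open MeasureTheory

private lemma map_comp_mequiv {Ω α β : Type*} [MeasurableSpace Ω] [MeasurableSpace α]
    [MeasurableSpace β] (P : Measure Ω) (e : α ≃ᵐ β) (u : Ω → α) :
    Measure.map (e ∘ u) P = Measure.map e (Measure.map u P) := by
  by_cases hu : AEMeasurable u P
  · exact (AEMeasurable.map_map_of_aemeasurable e.measurable.aemeasurable hu).symm
  · have h2 : ¬ AEMeasurable (e ∘ u) P := by
      intro h
      apply hu
      have := e.symm.measurable.comp_aemeasurable h
      simpa [Function.comp_def] using this
    rw [Measure.map_of_not_aemeasurable hu, Measure.map_of_not_aemeasurable h2,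
      Measure.map_zero]

/-- Let `G` act on `T` and `C : G → GL(ℝ^m)` satisfy
`C(g₁g₂) = C(g₁)∘C(g₂)`. Let `ℋ` act on `S`, `F : ℋ → G` a group isomorphism,
`φ : S → T` a bijection with `F(h)·φ(s) = φ(h·s)`, and `f : S → GL(ℝ^m)` with
`f(h·s)∘C(F(h)) = f(s)`. If `Y` is an `ℋ`-stationary `ℝ^m`-valued random field on
`S`, then `X(t) := (f(φ⁻¹(t)))⁻¹(Y(φ⁻¹(t)))` is `(G,C)`-self-similar. -/
theorem stmt_18 {m : ℕ} {G H T S : Type*} [Group G] [Group H]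
    [MulAction G T] [MulAction H S]
    {Ω : Type*} [MeasurableSpace Ω] (P : Measure Ω) [IsProbabilityMeasure P]
    (C : G → ((Fin m → ℝ) ≃ₗ[ℝ] (Fin m → ℝ)))
    (hC : ∀ (g₁ g₂ : G) (v : Fin m → ℝ), C (g₁ * g₂) v = C g₁ (C g₂ v))
    (F : H ≃* G) (φ : S ≃ T)
    (hφ : ∀ (h : H) (s : S), F h • φ s = φ (h • s))
    (f : S → ((Fin m → ℝ) ≃ₗ[ℝ] (Fin m → ℝ)))
    (hf : ∀ (h : H) (s : S) (v : Fin m → ℝ), f (h • s) (C (F h) v) = f s v)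
    (Y : S → Ω → (Fin m → ℝ))
    -- `Y` is `ℋ`-stationary
    (hstat : ∀ (h : H) (k : ℕ) (s : Fin k → S),
      Measure.map (fun ω => fun i => Y (h • s i) ω) P
        = Measure.map (fun ω => fun i => Y (s i) ω) P)
    (X : T → Ω → (Fin m → ℝ))
    (hX : ∀ (t : T) (ω : Ω), X t ω = (f (φ.symm t)).symm (Y (φ.symm t) ω)) :
    -- `X` is `(G,C)`-self-similar
    ∀ (g : G) (k : ℕ) (t : Fin k → T),
      Measure.map (fun ω => fun i => X (g • t i) ω) P
        = Measure.map (fun ω => fun i => C g (X (t i) ω)) P := by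
  intro g k t
  set h : H := F.symm g with hh
  set s : Fin k → S := fun i => φ.symm (t i) with hs
  have hkey : ∀ i, φ.symm (g • t i) = h • s i := by
    intro i
    apply φ.injective
    rw [φ.apply_symm_apply, ← hφ, F.apply_symm_apply, φ.apply_symm_apply]
  -- the measurable equivalence applying `C g ∘ (f (s i))⁻¹` coordinatewise
  let L : Fin k → ((Fin m → ℝ) ≃ₗ[ℝ] (Fin m → ℝ)) := fun i => (f (s i)).symm.trans (C g)
  let E : Fin k → ((Fin m → ℝ) ≃ᵐ (Fin m → ℝ)) := fun i =>
    (L i).toContinuousLinearEquiv.toHomeomorph.toMeasurableEquiv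
  let Φ : ((i : Fin k) → (Fin m → ℝ)) ≃ᵐ ((i : Fin k) → (Fin m → ℝ)) :=
    MeasurableEquiv.piCongrRight E
  have hL : ∀ i, (f (h • s i)).symm = fun v => (L i) v := by
    intro i
    funext v
    apply (f (h • s i)).injective
    rw [LinearEquiv.apply_symm_apply]
    show v = f (h • s i) (C g ((f (s i)).symm v))
    have := hf h (s i) ((f (s i)).symm v)
    rw [F.apply_symm_apply] at this
    rw [this, LinearEquiv.apply_symm_apply]
  have e1 : (fun ω => fun i => X (g • t i) ω)
      = Φ ∘ (fun ω => fun i => Y (h • s i) ω) := by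
    funext ω
    funext i
    rw [hX, hkey i]
    show (f (h • s i)).symm (Y (h • s i) ω) = (L i) (Y (h • s i) ω)
    rw [hL i]
  have e2 : (fun ω => fun i => C g (X (t i) ω))
      = Φ ∘ (fun ω => fun i => Y (s i) ω) := by
    funext ω
    funext i
    rw [hX]
    rfl
  rw [e1, e2, map_comp_mequiv, map_comp_mequiv, hstat h k s]
end

section
/- Let H̄ = (H_i^{(j)}), 1 ≤ i ≤ d, 1 ≤ j ≤ m, be a real m×d matrix and let X = (X₁,...,X_m) be an ℝ^m-valued random field on (0,∞)^d that is H̄-multi-self-similar: for every a ∈ (0,∞)^d, {X(a·t), t ∈ (0,∞)^d} =_{f.d.d.} {(∏_{i=1}^d a_i^{H_i^{(1)}}·X₁(t),...,∏_{i=1}^d a_i^{H_i^{(m)}}·X_m(t)), t ∈ (0,∞)^d}. Then the random field Y on ℝ^d defined by Y_j(s) = exp(−Σ_{i=1}^d s_i H_i^{(j)})·X_j(e^{s₁},...,e^{s_d}), j = 1,...,m, is strictly stationary: {Y(s+h), s ∈ ℝ^d} =_{f.d.d.} {Y(s), s ∈ ℝ^d} for every h ∈ ℝ^d. Conversely, if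 Y is a strictly stationary ℝ^m-valued random field on ℝ^d, then the field X defined by X_j(t) = (∏_{i=1}^d t_i^{H_i^{(j)}})·Y_j(ln t₁,...,ln t_d), t ∈ (0,∞)^d, is H̄-multi-self-similar. -/
open MeasureTheory

/-- If two random vectors have the same distribution, then so do their images under
componentwise multiplication by nonzero constants. -/
lemma key_mul_map {Ω : Type*} [MeasurableSpace Ω] (P : Measure Ω) [IsProbabilityMeasure P]
    {k m : ℕ} (c : Fin k → Fin m → ℝ) (hc : ∀ i j, c i j ≠ 0)
    (f f' : Ω → Fin k → Fin m → ℝ)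
    (h : Measure.map f P = Measure.map f' P) :
    Measure.map (fun ω => fun i => fun j => c i j * f ω i j) P
      = Measure.map (fun ω => fun i => fun j => c i j * f' ω i j) P := by
  have hxij : ∀ (i : Fin k) (j : Fin m), Measurable (fun x : Fin k → Fin m → ℝ => x i j) :=
    fun i j => (measurable_pi_apply j).comp (measurable_pi_apply i)
  have hg : Measurable (fun x : Fin k → Fin m → ℝ => fun i => fun j => c i j * x i j) :=
    measurable_pi_lambda _ fun i => measurable_pi_lambda _ fun j => (hxij i j).const_mul _
  have hginv : Measurable (fun x : Fin k → Fin m → ℝ => fun i => fun j => (c i j)⁻¹ * x i j) :=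
    measurable_pi_lambda _ fun i => measurable_pi_lambda _ fun j => (hxij i j).const_mul _
  by_cases hf : AEMeasurable f P
  · have hf' : AEMeasurable f' P := by
      by_contra hf'
      have h1 : (Measure.map f P) Set.univ = 1 := (Measure.isProbabilityMeasure_map hf).measure_univ
      rw [h, Measure.map_of_not_aemeasurable hf'] at h1
      simp at h1
    calc Measure.map (fun ω => fun i => fun j => c i j * f ω i j) P
        = Measure.map (fun x : Fin k → Fin m → ℝ => fun i => fun j => c i j * x i j)
            (Measure.map f P) :=
          (AEMeasurable.map_map_of_aemeasurable hg.aemeasurable hf).symm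
      _ = Measure.map (fun x : Fin k → Fin m → ℝ => fun i => fun j => c i j * x i j)
            (Measure.map f' P) := by rw [h]
      _ = Measure.map (fun ω => fun i => fun j => c i j * f' ω i j) P :=
          AEMeasurable.map_map_of_aemeasurable hg.aemeasurable hf'
  · have hf' : ¬ AEMeasurable f' P := by
      intro hf'
      have h1 : (Measure.map f' P) Set.univ = 1 := (Measure.isProbabilityMeasure_map hf').measure_univ
      rw [← h, Measure.map_of_not_aemeasurable hf] at h1
      simp at h1
    have hgf : ¬ AEMeasurable (fun ω => fun i => fun j => c i j * f ω i j) P := by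
      intro hgf
      apply hf
      have : f = (fun x : Fin k → Fin m → ℝ => fun i => fun j => (c i j)⁻¹ * x i j) ∘
          (fun ω => fun i => fun j => c i j * f ω i j) := by
        funext ω i j
        simp [inv_mul_cancel_left₀ (hc i j)]
      rw [this]
      exact hginv.comp_aemeasurable hgf
    have hgf' : ¬ AEMeasurable (fun ω => fun i => fun j => c i j * f' ω i j) P := by
      intro hgf'
      apply hf'
      have : f' = (fun x : Fin k → Fin m → ℝ => fun i => fun j => (c i j)⁻¹ * x i j) ∘
          (fun ω => fun i => fun j => c i j * f' ω i j) := by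
        funext ω i j
        simp [inv_mul_cancel_left₀ (hc i j)]
      rw [this]
      exact hginv.comp_aemeasurable hgf'
    rw [Measure.map_of_not_aemeasurable hgf, Measure.map_of_not_aemeasurable hgf']

/-- Lamperti-type transformation. Let `H̄ = (H_i^{(j)})` be a real
`m×d` matrix. (i) If `X` is an `H̄`-multi-self-similar `ℝ^m`-valued random field
on `(0,∞)^d` (`{X(a·t)} =_{f.d.d.} {(∏_i a_i^{H_i^{(j)}} X_j(t))_j}` for all
`a ∈ (0,∞)^d`), then `Y_j(s) := exp(−Σ_i s_i H_i^{(j)})·X_j(e^{s₁},...,e^{s_d})`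
is strictly stationary on `ℝ^d`. (ii) Conversely, if `Y` is strictly stationary
on `ℝ^d`, then `X_j(t) := (∏_i t_i^{H_i^{(j)}})·Y_j(ln t₁,...,ln t_d)` is
`H̄`-multi-self-similar on `(0,∞)^d`. -/
theorem stmt_19 {d m : ℕ} {Ω : Type*} [MeasurableSpace Ω]
    (P : Measure Ω) [IsProbabilityMeasure P]
    (H : Fin m → Fin d → ℝ) :
    -- (i) direct Lamperti transformation
    (∀ X Y : (Fin d → ℝ) → Ω → (Fin m → ℝ),
      -- `X` is `H̄`-multi-self-similar on `(0,∞)^d`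
      (∀ a : Fin d → ℝ, (∀ i, 0 < a i) →
        ∀ (k : ℕ) (t : Fin k → Fin d → ℝ), (∀ i i', 0 < t i i') →
          Measure.map (fun ω => fun i => X (a * t i) ω) P
            = Measure.map
                (fun ω => fun i => fun j => (∏ i', a i' ^ H j i') * X (t i) ω j) P) →
      -- `Y` is the Lamperti transform of `X`
      (∀ (s : Fin d → ℝ) (ω : Ω) (j : Fin m),
        Y s ω j = Real.exp (-∑ i, s i * H j i) * X (fun i => Real.exp (s i)) ω j) →
      -- `Y` is strictly stationary on `ℝ^d`
      (∀ h : Fin d → ℝ, ∀ (k : ℕ) (s : Fin k → Fin d → ℝ),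
        Measure.map (fun ω => fun i => Y (s i + h) ω) P
          = Measure.map (fun ω => fun i => Y (s i) ω) P)) ∧
    -- (ii) converse Lamperti transformation
    (∀ Y X : (Fin d → ℝ) → Ω → (Fin m → ℝ),
      -- `Y` is strictly stationary on `ℝ^d`
      (∀ h : Fin d → ℝ, ∀ (k : ℕ) (s : Fin k → Fin d → ℝ),
        Measure.map (fun ω => fun i => Y (s i + h) ω) P
          = Measure.map (fun ω => fun i => Y (s i) ω) P) →
      -- `X` is the inverse Lamperti transform of `Y`
      (∀ (t : Fin d → ℝ) (ω : Ω) (j : Fin m),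
        X t ω j = (∏ i, t i ^ H j i) * Y (fun i => Real.log (t i)) ω j) →
      -- `X` is `H̄`-multi-self-similar on `(0,∞)^d`
      (∀ a : Fin d → ℝ, (∀ i, 0 < a i) →
        ∀ (k : ℕ) (t : Fin k → Fin d → ℝ), (∀ i i', 0 < t i i') →
          Measure.map (fun ω => fun i => X (a * t i) ω) P
            = Measure.map
                (fun ω => fun i => fun j => (∏ i', a i' ^ H j i') * X (t i) ω j) P)) := by
  constructor
  · -- (i)
    intro X Y hX hY h k s
    set a : Fin d → ℝ := fun i' => Real.exp (h i') with ha
    set t : Fin k → Fin d → ℝ := fun i i' => Real.exp (s i i') with ht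
    set c : Fin k → Fin m → ℝ :=
      fun i j => Real.exp (-∑ i', (s i i' + h i') * H j i') with hcdef
    have hprod : ∀ j : Fin m, (∏ i', a i' ^ H j i') = Real.exp (∑ i', h i' * H j i') := by
      intro j
      rw [Real.exp_sum]
      exact Finset.prod_congr rfl fun i' _ => (Real.exp_mul _ _).symm
    have hXeq := hX a (fun i' => Real.exp_pos _) k t (fun i i' => Real.exp_pos _)
    have hkey := key_mul_map P c (fun i j => (Real.exp_pos _).ne') _ _ hXeq
    have e1 : (fun ω => fun i => Y (s i + h) ω)
        = fun ω => fun i => fun j => c i j * X (a * t i) ω j := by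
      funext ω i j
      have harg : (fun i' => Real.exp ((s i + h) i')) = a * t i := by
        funext i'
        simp only [Pi.add_apply, Pi.mul_apply, ha, ht, Real.exp_add]
        ring
      rw [hY, harg]
      simp only [hcdef, Pi.add_apply]
    have e2 : (fun ω => fun i => Y (s i) ω)
        = fun ω => fun i => fun j => c i j * ((∏ i', a i' ^ H j i') * X (t i) ω j) := by
      funext ω i j
      have hsum : -∑ i', (s i i' + h i') * H j i' + ∑ i', h i' * H j i'
          = -∑ i', s i i' * H j i' := by
        simp only [add_mul, Finset.sum_add_distrib]
        ring
      rw [hY, hprod, ← mul_assoc]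
      simp only [hcdef]
      rw [← Real.exp_add, hsum]
    rw [e1, e2]
    exact hkey
  · -- (ii)
    intro Y X hYst hX a ha k t ht
    set s : Fin k → Fin d → ℝ := fun i i' => Real.log (t i i') with hs
    set hh : Fin d → ℝ := fun i' => Real.log (a i') with hhdef
    set c : Fin k → Fin m → ℝ :=
      fun i j => ∏ i', (a i' * t i i') ^ H j i' with hcdef
    have hcne : ∀ i j, c i j ≠ 0 := by
      intro i j
      exact (Finset.prod_pos fun i' _ =>
        Real.rpow_pos_of_pos (mul_pos (ha i') (ht i i')) _).ne'
    have hYeq := hYst hh k s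
    have hkey := key_mul_map P c hcne _ _ hYeq
    have e1 : (fun ω => fun i => X (a * t i) ω)
        = fun ω => fun i => fun j => c i j * Y (s i + hh) ω j := by
      funext ω i j
      have harg : (fun i' => Real.log ((a * t i) i')) = s i + hh := by
        funext i'
        simp only [Pi.mul_apply, Pi.add_apply, hs, hhdef]
        rw [Real.log_mul (ha i').ne' (ht i i').ne']
        ring
      rw [hX, harg]
      simp only [hcdef, Pi.mul_apply]
    have e2 : (fun ω => fun i => fun j => (∏ i', a i' ^ H j i') * X (t i) ω j)
        = fun ω => fun i => fun j => c i j * Y (s i) ω j := by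
      funext ω i j
      rw [hX, ← mul_assoc, hcdef]
      congr 1
      rw [← Finset.prod_mul_distrib]
      exact Finset.prod_congr rfl fun i' _ =>
        (Real.mul_rpow (ha i').le (ht i i').le).symm
    rw [e1, e2]
    exact hkey
end
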